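/- arXiv:1712.04800 — 7 statements merged into one kernel-verified Lean document; each statement's English description precedes it below -/
import Mathlib

section
/- (Desargues' theorem, direct direction.) Let K be a division ring and let A, B, C, A', B', C', S be points of the projective plane ℙ²(K) such that: A, B, C are not collinear; A', B', C' are not collinear; S, A, A' are pairwise distinct and collinear; S, B, B' are pairwise distinct and collinear; S, C, C' are pairwise distinct and collinear; the lines AA', BB', CC' are pairwise distinct; and the lines AB and A'B', AC and A'C', BC and B'C' are respectively distinct. If X is a point lying on both lines AB and A'B', Y is a point lying on both lines AC and A'C', and Z is a point lying on both lines BC and B'C', then X, Y, Z are collinear. -/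
/-- Three points (1-dimensional subspaces) of `ℙ²(K)` are collinear if they are contained in a
common 2-dimensional subspace of `K³`. -/
def Collinear3 {K : Type*} [DivisionRing K] (P Q R : Submodule K (Fin 3 → K)) : Prop :=
  ∃ W : Submodule K (Fin 3 → K), Module.finrank K W = 2 ∧ P ≤ W ∧ Q ≤ W ∧ R ≤ W

section Aux

open Module Submodule

variable {K : Type*} [DivisionRing K]

/-- A rank-1 submodule is spanned by any of its nonzero elements. -/
lemma rank1_eq_span_of_mem {P : Submodule K (Fin 3 → K)} (hP : finrank K P = 1)
    {v : Fin 3 → K} (hv : v ∈ P) (hv0 : v ≠ 0) : P = K ∙ v := by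
  symm
  apply Submodule.eq_of_le_of_finrank_eq
  · exact (Submodule.span_singleton_le_iff_mem _ _).mpr hv
  · rw [finrank_span_singleton hv0, hP]

/-- A rank-1 submodule has a nonzero spanning vector. -/
lemma rank1_exists_span (P : Submodule K (Fin 3 → K)) (hP : finrank K P = 1) :
    ∃ v : Fin 3 → K, v ≠ 0 ∧ P = K ∙ v := by
  have hbot : P ≠ ⊥ := by
    intro h
    rw [h, finrank_bot] at hP
    exact absurd hP (by norm_num)
  obtain ⟨v, hv, hv0⟩ := (Submodule.ne_bot_iff P).mp hbot
  exact ⟨v, hv0, rank1_eq_span_of_mem hP hv hv0⟩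

/-- The sup of two distinct rank-1 submodules has rank 2. -/
lemma sup_rank2 {P Q : Submodule K (Fin 3 → K)} (hP : finrank K P = 1)
    (hQ : finrank K Q = 1) (hPQ : P ≠ Q) : finrank K ↥(P ⊔ Q) = 2 := by
  have h := Submodule.finrank_sup_add_finrank_inf_eq P Q
  have hle : finrank K ↥(P ⊓ Q) ≤ 1 := hP ▸ Submodule.finrank_mono inf_le_left
  have hinf : finrank K ↥(P ⊓ Q) = 0 := by
    by_contra h0
    have h1 : finrank K ↥(P ⊓ Q) = 1 := by omega
    have e1 : P ⊓ Q = P := Submodule.eq_of_le_of_finrank_eq inf_le_left (h1.trans hP.symm)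
    have e2 : P ⊓ Q = Q := Submodule.eq_of_le_of_finrank_eq inf_le_right (h1.trans hQ.symm)
    exact hPQ (e1 ▸ e2)
  omega

/-- Any two rank-1 submodules of `K³` lie in a common rank-2 submodule. -/
lemma exists_rank2_of_two {P Q : Submodule K (Fin 3 → K)} (hP : finrank K P = 1)
    (hQ : finrank K Q = 1) :
    ∃ W : Submodule K (Fin 3 → K), finrank K W = 2 ∧ P ≤ W ∧ Q ≤ W := by
  by_cases hPQ : P = Q
  · -- extend P to a rank-2 subspace
    have hPtop : P ≠ ⊤ := by
      intro h
      rw [h, finrank_top, Module.finrank_fin_fun] at hP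
      exact absurd hP (by norm_num)
    have : ∃ v : Fin 3 → K, v ∉ P := by
      by_contra h
      push_neg at h
      exact hPtop (Submodule.eq_top_iff'.mpr h)
    obtain ⟨v, hv⟩ := this
    have hv0 : v ≠ 0 := fun h => hv (h ▸ P.zero_mem)
    refine ⟨P ⊔ (K ∙ v), sup_rank2 hP (finrank_span_singleton hv0) ?_, le_sup_left,
      hPQ ▸ le_sup_left⟩
    intro h
    exact hv (h ▸ Submodule.mem_span_singleton_self v)
  · exact ⟨P ⊔ Q, sup_rank2 hP hQ hPQ, le_sup_left, le_sup_right⟩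

/-- Noncollinearity forces the three points to be pairwise distinct (each pair case). -/
lemma ne_of_not_collinear {P Q R : Submodule K (Fin 3 → K)} (hP : finrank K P = 1)
    (hQ : finrank K Q = 1) (hR : finrank K R = 1) (h : ¬ Collinear3 P Q R) :
    P ≠ Q ∧ P ≠ R ∧ Q ≠ R := by
  refine ⟨?_, ?_, ?_⟩
  · intro e
    obtain ⟨W, hW, h1, h2⟩ := exists_rank2_of_two hQ hR
    exact h ⟨W, hW, e ▸ h1, h1, h2⟩
  · intro e
    obtain ⟨W, hW, h1, h2⟩ := exists_rank2_of_two hP hQ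
    exact h ⟨W, hW, h1, h2, e ▸ h1⟩
  · intro e
    obtain ⟨W, hW, h1, h2⟩ := exists_rank2_of_two hP hQ
    exact h ⟨W, hW, h1, h2, e ▸ h2⟩

/-- The intersection of two distinct rank-2 submodules of `K³` has rank 1. -/
lemma inf_rank1 {U V : Submodule K (Fin 3 → K)} (hU : finrank K U = 2)
    (hV : finrank K V = 2) (hUV : U ≠ V) : finrank K ↥(U ⊓ V) = 1 := by
  have h := Submodule.finrank_sup_add_finrank_inf_eq U V
  have htop : finrank K ↥(U ⊔ V) ≤ 3 := by
    have := Submodule.finrank_le (U ⊔ V)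
    rwa [Module.finrank_fin_fun] at this
  have hlow : finrank K U ≤ finrank K ↥(U ⊔ V) := Submodule.finrank_mono le_sup_left
  have hle2 : finrank K ↥(U ⊓ V) ≤ 2 := hU ▸ Submodule.finrank_mono inf_le_left
  have hne2 : finrank K ↥(U ⊓ V) ≠ 2 := by
    intro h2
    have e1 : U ⊓ V = U := Submodule.eq_of_le_of_finrank_eq inf_le_left (h2.trans hU.symm)
    have e2 : U ⊓ V = V := Submodule.eq_of_le_of_finrank_eq inf_le_right (h2.trans hV.symm)
    exact hUV (e1 ▸ e2)
  omega

/-- From `Collinear3 S A A'` with `A ≠ A'` of rank 1, conclude `S ≤ A ⊔ A'`. -/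
lemma le_sup_of_collinear {S A A' : Submodule K (Fin 3 → K)} (hA : finrank K A = 1)
    (hA' : finrank K A' = 1) (hAA' : A ≠ A') (h : Collinear3 S A A') : S ≤ A ⊔ A' := by
  obtain ⟨W, hW, hSW, hAW, hA'W⟩ := h
  have : A ⊔ A' = W :=
    Submodule.eq_of_le_of_finrank_eq (sup_le hAW hA'W) ((sup_rank2 hA hA' hAA').trans hW.symm)
  exact this ▸ hSW

end Aux

/-- Desargues' theorem, direct direction, in the projective plane `ℙ²(K)` over a
division ring `K`. -/
theorem desargues_direct {K : Type*} [DivisionRing K]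
    (A B C A' B' C' S X Y Z : Submodule K (Fin 3 → K))
    (hA : Module.finrank K A = 1) (hB : Module.finrank K B = 1)
    (hC : Module.finrank K C = 1) (hA' : Module.finrank K A' = 1)
    (hB' : Module.finrank K B' = 1) (hC' : Module.finrank K C' = 1)
    (hS : Module.finrank K S = 1)
    (hX : Module.finrank K X = 1) (hY : Module.finrank K Y = 1)
    (hZ : Module.finrank K Z = 1)
    (hABC : ¬ Collinear3 A B C) (hA'B'C' : ¬ Collinear3 A' B' C')
    (hSA : S ≠ A) (hSA' : S ≠ A') (hAA' : A ≠ A') (hcolA : Collinear3 S A A')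
    (hSB : S ≠ B) (hSB' : S ≠ B') (hBB' : B ≠ B') (hcolB : Collinear3 S B B')
    (hSC : S ≠ C) (hSC' : S ≠ C') (hCC' : C ≠ C') (hcolC : Collinear3 S C C')
    (hl1 : A ⊔ A' ≠ B ⊔ B') (hl2 : A ⊔ A' ≠ C ⊔ C') (hl3 : B ⊔ B' ≠ C ⊔ C')
    (hAB : A ⊔ B ≠ A' ⊔ B') (hAC : A ⊔ C ≠ A' ⊔ C') (hBC : B ⊔ C ≠ B' ⊔ C')
    (hXon : X ≤ A ⊔ B ∧ X ≤ A' ⊔ B')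
    (hYon : Y ≤ A ⊔ C ∧ Y ≤ A' ⊔ C')
    (hZon : Z ≤ B ⊔ C ∧ Z ≤ B' ⊔ C') :
    Collinear3 X Y Z := by
  classical
  open Module Submodule in
  -- pairwise distinctness of A, B, C and A', B', C'
  obtain ⟨hABne, hACne, hBCne⟩ := ne_of_not_collinear hA hB hC hABC
  -- a nonzero vector spanning S
  obtain ⟨s, hs0, hsspan⟩ := rank1_exists_span S hS
  have hsS : s ∈ S := hsspan ▸ Submodule.mem_span_singleton_self s
  -- decompose s along each of the three lines through S
  have hdecomp : ∀ P P' : Submodule K (Fin 3 → K), finrank K P = 1 → finrank K P' = 1 →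
      P ≠ P' → S ≠ P → S ≠ P' → Collinear3 S P P' →
      ∃ p p' : Fin 3 → K, p ∈ P ∧ p' ∈ P' ∧ p ≠ 0 ∧ p' ≠ 0 ∧ s = p + p' := by
    intro P P' hP hP' hPP' hSP hSP' hcol
    have hmem : s ∈ P ⊔ P' := le_sup_of_collinear hP hP' hPP' hcol hsS
    obtain ⟨p, hp, p', hp', hsum⟩ := Submodule.mem_sup.mp hmem
    refine ⟨p, p', hp, hp', ?_, ?_, hsum.symm⟩
    · intro h0
      rw [h0, zero_add] at hsum
      exact hSP' (hsspan.trans (rank1_eq_span_of_mem hP' (hsum ▸ hp') hs0).symm)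
    · intro h0
      rw [h0, add_zero] at hsum
      exact hSP (hsspan.trans (rank1_eq_span_of_mem hP (hsum ▸ hp) hs0).symm)
  obtain ⟨a, a', haA, ha'A', ha0, ha'0, hsa⟩ :=
    hdecomp A A' hA hA' hAA' hSA hSA' hcolA
  obtain ⟨b, b', hbB, hb'B', hb0, hb'0, hsb⟩ :=
    hdecomp B B' hB hB' hBB' hSB hSB' hcolB
  obtain ⟨c, c', hcC, hc'C', hc0, hc'0, hsc⟩ :=
    hdecomp C C' hC hC' hCC' hSC hSC' hcolC
  -- A = span a, etc.
  have hAa : A = K ∙ a := rank1_eq_span_of_mem hA haA ha0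
  have hBb : B = K ∙ b := rank1_eq_span_of_mem hB hbB hb0
  have hCc : C = K ∙ c := rank1_eq_span_of_mem hC hcC hc0
  -- differences are nonzero
  have hdiff_ne : ∀ (P Q : Submodule K (Fin 3 → K)) (p q : Fin 3 → K),
      finrank K P = 1 → finrank K Q = 1 → p ∈ P → q ∈ Q → p ≠ 0 → P ≠ Q → p - q ≠ 0 := by
    intro P Q p q hP hQ hp hq hp0 hPQ h
    have hpq : p = q := by
      have := sub_eq_zero.mp h
      exact this
    apply hPQ
    rw [rank1_eq_span_of_mem hP hp hp0, rank1_eq_span_of_mem hQ (hpq ▸ hq) hp0]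
  have hab0 : a - b ≠ 0 := hdiff_ne A B a b hA hB haA hbB ha0 hABne
  have hac0 : a - c ≠ 0 := hdiff_ne A C a c hA hC haA hcC ha0 hACne
  have hbc0 : b - c ≠ 0 := hdiff_ne B C b c hB hC hbB hcC hb0 hBCne
  -- the key intersections are rank 1 and spanned by the differences
  have hkey : ∀ (P Q P' Q' : Submodule K (Fin 3 → K)) (p q p' q' : Fin 3 → K),
      finrank K P = 1 → finrank K Q = 1 → finrank K P' = 1 → finrank K Q' = 1 →
      P ≠ Q → P' ≠ Q' → P ⊔ Q ≠ P' ⊔ Q' →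
      p ∈ P → q ∈ Q → p' ∈ P' → q' ∈ Q' → p - q ≠ 0 → s = p + p' → s = q + q' →
      (P ⊔ Q) ⊓ (P' ⊔ Q') = K ∙ (p - q) := by
    intro P Q P' Q' p q p' q' hP hQ hP' hQ' hPQ hP'Q' hline hp hq hp' hq' hpq0 hsp hsq
    have hmem : p - q ∈ (P ⊔ Q) ⊓ (P' ⊔ Q') := by
      constructor
      · exact Submodule.sub_mem _ (Submodule.mem_sup_left hp) (Submodule.mem_sup_right hq)
      · have : p - q = q' - p' := by
          have : p + p' = q + q' := hsp ▸ hsq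
          linear_combination (norm := abel) this
        rw [this]
        exact Submodule.sub_mem _ (Submodule.mem_sup_right hq') (Submodule.mem_sup_left hp')
    have hrank : finrank K ↥((P ⊔ Q) ⊓ (P' ⊔ Q')) = 1 :=
      inf_rank1 (sup_rank2 hP hQ hPQ) (sup_rank2 hP' hQ' hP'Q') hline
    exact rank1_eq_span_of_mem hrank hmem hpq0
  have hXeq : X = K ∙ (a - b) := by
    have hI : (A ⊔ B) ⊓ (A' ⊔ B') = K ∙ (a - b) := by
      obtain ⟨hA'B'ne, _, _⟩ := ne_of_not_collinear hA' hB' hC' hA'B'C'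
      exact hkey A B A' B' a b a' b' hA hB hA' hB' hABne hA'B'ne hAB haA hbB ha'A' hb'B'
        hab0 hsa hsb
    have hXle : X ≤ (A ⊔ B) ⊓ (A' ⊔ B') := le_inf hXon.1 hXon.2
    have : finrank K ↥((A ⊔ B) ⊓ (A' ⊔ B')) = 1 := by
      rw [hI]; exact finrank_span_singleton hab0
    rw [← hI]
    exact (Submodule.eq_of_le_of_finrank_eq hXle (hX.trans this.symm))
  have hYeq : Y = K ∙ (a - c) := by
    have hI : (A ⊔ C) ⊓ (A' ⊔ C') = K ∙ (a - c) := by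
      obtain ⟨_, hA'C'ne, _⟩ := ne_of_not_collinear hA' hB' hC' hA'B'C'
      exact hkey A C A' C' a c a' c' hA hC hA' hC' hACne hA'C'ne hAC haA hcC ha'A' hc'C'
        hac0 hsa hsc
    have hYle : Y ≤ (A ⊔ C) ⊓ (A' ⊔ C') := le_inf hYon.1 hYon.2
    have : finrank K ↥((A ⊔ C) ⊓ (A' ⊔ C')) = 1 := by
      rw [hI]; exact finrank_span_singleton hac0
    rw [← hI]
    exact (Submodule.eq_of_le_of_finrank_eq hYle (hY.trans this.symm))
  have hZeq : Z = K ∙ (b - c) := by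
    have hI : (B ⊔ C) ⊓ (B' ⊔ C') = K ∙ (b - c) := by
      obtain ⟨_, _, hB'C'ne⟩ := ne_of_not_collinear hA' hB' hC' hA'B'C'
      exact hkey B C B' C' b c b' c' hB hC hB' hC' hBCne hB'C'ne hBC hbB hcC hb'B' hc'C'
        hbc0 hsb hsc
    have hZle : Z ≤ (B ⊔ C) ⊓ (B' ⊔ C') := le_inf hZon.1 hZon.2
    have : finrank K ↥((B ⊔ C) ⊓ (B' ⊔ C')) = 1 := by
      rw [hI]; exact finrank_span_singleton hbc0
    rw [← hI]
    exact (Submodule.eq_of_le_of_finrank_eq hZle (hZ.trans this.symm))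
  -- final plane: span of (a - c) and (b - c)
  have hneYZ : (K ∙ (a - c)) ≠ (K ∙ (b - c)) := by
    intro h
    have hmem : b - c ∈ (K ∙ (a - c)) := h ▸ Submodule.mem_span_singleton_self (b - c)
    obtain ⟨t, ht⟩ := Submodule.mem_span_singleton.mp hmem
    -- b = t • a + (1 - t) • c ∈ A ⊔ C
    have hbmem : b ∈ A ⊔ C := by
      have : b = t • a + (1 - t) • c := by
        have := ht
        rw [smul_sub] at this
        have hb : b = t • a - t • c + c := by
          rw [this]; abel
        rw [hb, sub_smul, one_smul]
        abel
      rw [this]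
      exact Submodule.add_mem _ (Submodule.mem_sup_left (Submodule.smul_mem _ _ haA))
        (Submodule.mem_sup_right (Submodule.smul_mem _ _ hcC))
    have hBle : B ≤ A ⊔ C := by
      rw [hBb]
      exact (Submodule.span_singleton_le_iff_mem _ _).mpr hbmem
    exact hABC ⟨A ⊔ C, sup_rank2 hA hC hACne, le_sup_left, hBle, le_sup_right⟩
  refine ⟨(K ∙ (a - c)) ⊔ (K ∙ (b - c)),
    sup_rank2 (finrank_span_singleton hac0) (finrank_span_singleton hbc0) hneYZ, ?_, ?_, ?_⟩
  · rw [hXeq]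
    have : a - b = (a - c) - (b - c) := by abel
    rw [this]
    exact (Submodule.span_singleton_le_iff_mem _ _).mpr
      (Submodule.sub_mem _ (Submodule.mem_sup_left (Submodule.mem_span_singleton_self _))
        (Submodule.mem_sup_right (Submodule.mem_span_singleton_self _)))
  · rw [hYeq]
    exact le_sup_left
  · rw [hZeq]
    exact le_sup_right
end

section
/- (Desargues' theorem, converse direction.) Let K be a division ring and let A, B, C, A', B', C' be points of the projective plane ℙ²(K) such that: A, B, C are not collinear; A', B', C' are not collinear; A ≠ A', B ≠ B', C ≠ C'; the lines AA', BB', CC' are pairwise distinct; and the lines AB and A'B', AC and A'C', BC and B'C' are respectively distinct. Let X be the point on both lines AB and A'B', Y the point on both lines AC and A'C', and Z the point on both lines BC and B'C'. If X, Y, Z are collinear, then the three lines AA', BB', CC' are concurrent (contain a common point). -/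
open Submodule Module

section Aux

variable {K : Type*} [DivisionRing K]

lemma exists_gen (P : Submodule K (Fin 3 → K)) (hP : Module.finrank K P = 1) :
    ∃ v : Fin 3 → K, v ≠ 0 ∧ P = Submodule.span K {v} := by
  obtain ⟨v, hv0, hv⟩ := (finrank_eq_one_iff' (K := K) (V := P)).mp hP
  refine ⟨(v : Fin 3 → K), by simpa using hv0, le_antisymm ?_ ?_⟩
  · intro w hw
    obtain ⟨c, hc⟩ := hv ⟨w, hw⟩
    exact Submodule.mem_span_singleton.mpr ⟨c, by simpa using congrArg Subtype.val hc⟩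
  · rw [Submodule.span_singleton_le_iff_mem]; exact v.2

lemma step_ext (S : Submodule K (Fin 3 → K)) (h : Module.finrank K S < 3) :
    ∃ S' : Submodule K (Fin 3 → K), S ≤ S' ∧
      Module.finrank K S' = Module.finrank K S + 1 := by
  have htop : Module.finrank K (⊤ : Submodule K (Fin 3 → K)) = 3 := by
    rw [finrank_top]; simp [Module.finrank_pi]
  have hSne : S ≠ ⊤ := fun hS => by rw [hS, htop] at h; omega
  obtain ⟨v, -, hvS⟩ := SetLike.exists_of_lt (lt_top_iff_ne_top.mpr hSne : S < ⊤)
  have hv0 : v ≠ 0 := fun h0 => hvS (h0 ▸ S.zero_mem)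
  refine ⟨S ⊔ Submodule.span K {v}, le_sup_left, ?_⟩
  have hinf : S ⊓ Submodule.span K {v} = ⊥ := by
    rw [eq_bot_iff]
    rintro w ⟨hwS, hwv⟩
    obtain ⟨c, rfl⟩ := Submodule.mem_span_singleton.mp hwv
    rcases eq_or_ne c 0 with rfl | hc
    · simp
    · exact absurd (by simpa [smul_smul, inv_mul_cancel₀ hc] using S.smul_mem c⁻¹ hwS) hvS
  have := Submodule.finrank_sup_add_finrank_inf_eq S (Submodule.span K {v})
  rw [hinf, finrank_bot, finrank_span_singleton hv0] at this
  omega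

lemma ext2 (S : Submodule K (Fin 3 → K)) (hS : Module.finrank K S ≤ 2) :
    ∃ W : Submodule K (Fin 3 → K), Module.finrank K W = 2 ∧ S ≤ W := by
  by_cases h2 : Module.finrank K S = 2
  · exact ⟨S, h2, le_refl S⟩
  obtain ⟨S1, hle1, hr1⟩ := step_ext S (by omega)
  by_cases h2' : Module.finrank K S1 = 2
  · exact ⟨S1, h2', hle1⟩
  obtain ⟨S2, hle2, hr2⟩ := step_ext S1 (by omega)
  exact ⟨S2, by omega, hle1.trans hle2⟩

lemma finrank_span_single_le (a : Fin 3 → K) :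
    Module.finrank K (Submodule.span K {a}) ≤ 1 := by
  rcases eq_or_ne a 0 with rfl | ha
  · rw [Submodule.span_zero_singleton]; simp
  · rw [finrank_span_singleton ha]

lemma indep2 {A A' : Submodule K (Fin 3 → K)} {a a' : Fin 3 → K}
    (hne : A ≠ A') (hAa : A = Submodule.span K {a}) (hA'a : A' = Submodule.span K {a'})
    (ha : a ≠ 0) (ha' : a' ≠ 0) {c d : K} (h : c • a + d • a' = 0) : c = 0 ∧ d = 0 := by
  have key : ∀ c d : K, c • a + d • a' = 0 → c ≠ 0 → d ≠ 0 → False := by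
    intro c d h hc hd
    apply hne
    have h1 : a ∈ Submodule.span K {a'} := by
      have ea : a = c⁻¹ • (c • a) := by rw [smul_smul, inv_mul_cancel₀ hc, one_smul]
      rw [ea, ← neg_eq_of_add_eq_zero_left h]
      exact Submodule.smul_mem _ _ (Submodule.neg_mem _
        (Submodule.smul_mem _ _ (Submodule.mem_span_singleton_self a')))
    have h2 : a' ∈ Submodule.span K {a} := by
      have ea : a' = d⁻¹ • (d • a') := by rw [smul_smul, inv_mul_cancel₀ hd, one_smul]
      rw [ea, ← neg_eq_of_add_eq_zero_right h]
      exact Submodule.smul_mem _ _ (Submodule.neg_mem _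
        (Submodule.smul_mem _ _ (Submodule.mem_span_singleton_self a)))
    rw [hAa, hA'a]
    refine le_antisymm ?_ ?_ <;> rw [Submodule.span_singleton_le_iff_mem]
    · exact h1
    · exact h2
  have hc : c = 0 := by
    by_contra hc
    have hd : d ≠ 0 := by
      intro hd; subst hd
      simp only [zero_smul, add_zero] at h
      exact ha ((smul_eq_zero.mp h).resolve_left hc)
    exact key c d h hc hd
  subst hc
  simp only [zero_smul, zero_add] at h
  exact ⟨rfl, (smul_eq_zero.mp h).resolve_right ha'⟩

lemma indep3 {A B C : Submodule K (Fin 3 → K)} {a b c : Fin 3 → K}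
    (hABC : ¬ Collinear3 A B C)
    (hAa : A = Submodule.span K {a}) (hBb : B = Submodule.span K {b})
    (hCc : C = Submodule.span K {c})
    (ha : a ≠ 0) (hb : b ≠ 0)
    {c1 c2 c3 : K} (h : c1 • a + c2 • b + c3 • c = 0) :
    c1 = 0 ∧ c2 = 0 ∧ c3 = 0 := by
  have haA : a ∈ A := hAa ▸ Submodule.mem_span_singleton_self a
  have hbB : b ∈ B := hBb ▸ Submodule.mem_span_singleton_self b
  have hc3 : c3 = 0 := by
    by_contra hc3
    have hmem : c3 • c ∈ A ⊔ B := by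
      have : c3 • c = -(c1 • a) + -(c2 • b) := by
        rw [← neg_add, neg_eq_of_add_eq_zero_right h]
      rw [this]
      exact Submodule.add_mem _
        (Submodule.neg_mem _ (Submodule.mem_sup_left (Submodule.smul_mem _ _ haA)))
        (Submodule.neg_mem _ (Submodule.mem_sup_right (Submodule.smul_mem _ _ hbB)))
    have hcm : c ∈ A ⊔ B := by
      have := Submodule.smul_mem _ c3⁻¹ hmem
      rwa [smul_smul, inv_mul_cancel₀ hc3, one_smul] at this
    obtain ⟨W, hW2, hW⟩ := ext2 (A ⊔ B) (by
      calc Module.finrank K ↑(A ⊔ B) ≤ Module.finrank K A + Module.finrank K B :=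
        Submodule.finrank_add_le_finrank_add_finrank A B
      _ ≤ 2 := by
        have h1 := hAa ▸ finrank_span_single_le a
        have h2 := hBb ▸ finrank_span_single_le b
        omega)
    exact hABC ⟨W, hW2, le_sup_left.trans hW, le_sup_right.trans hW,
      (hCc ▸ (Submodule.span_singleton_le_iff_mem _ _).mpr (hW hcm))⟩
  subst hc3
  simp only [zero_smul, add_zero] at h
  have hc2 : c2 = 0 := by
    by_contra hc2
    have hbm : b ∈ A := by
      have hb2 : c2 • b = -(c1 • a) := (neg_eq_of_add_eq_zero_right h).symm
      have := Submodule.smul_mem _ c2⁻¹ (hb2 ▸ Submodule.neg_mem _ (Submodule.smul_mem _ c1 haA))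
      rwa [smul_smul, inv_mul_cancel₀ hc2, one_smul] at this
    obtain ⟨W, hW2, hW⟩ := ext2 (A ⊔ C) (by
      calc Module.finrank K ↑(A ⊔ C) ≤ Module.finrank K A + Module.finrank K C :=
        Submodule.finrank_add_le_finrank_add_finrank A C
      _ ≤ 2 := by
        have h1 := hAa ▸ finrank_span_single_le a
        have h2 := hCc ▸ finrank_span_single_le c
        omega)
    exact hABC ⟨W, hW2, le_sup_left.trans hW,
      (hBb ▸ (Submodule.span_singleton_le_iff_mem _ _).mpr (hW (le_sup_left (a := A) hbm))),
      le_sup_right.trans hW⟩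
  subst hc2
  simp only [zero_smul, add_zero] at h
  exact ⟨(smul_eq_zero.mp h).resolve_right ha, rfl, rfl⟩

lemma decomp {A B : Submodule K (Fin 3 → K)} {a b v : Fin 3 → K}
    (hAa : A = Submodule.span K {a}) (hBb : B = Submodule.span K {b})
    (hv : v ∈ A ⊔ B) : ∃ s t : K, v = s • a + t • b := by
  obtain ⟨va, hva, vb, hvb, hsum⟩ := Submodule.mem_sup.mp hv
  rw [hAa] at hva; rw [hBb] at hvb
  obtain ⟨s, rfl⟩ := Submodule.mem_span_singleton.mp hva
  obtain ⟨t, rfl⟩ := Submodule.mem_span_singleton.mp hvb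
  exact ⟨s, t, hsum.symm⟩

end Aux

/-- Desargues' theorem, converse direction, in the projective plane `ℙ²(K)` over a
division ring `K`: if the intersection points of corresponding sides of two triangles are
collinear, then the lines joining corresponding vertices are concurrent. -/
theorem desargues_converse {K : Type*} [DivisionRing K]
    (A B C A' B' C' X Y Z : Submodule K (Fin 3 → K))
    (hA : Module.finrank K A = 1) (hB : Module.finrank K B = 1)
    (hC : Module.finrank K C = 1) (hA' : Module.finrank K A' = 1)
    (hB' : Module.finrank K B' = 1) (hC' : Module.finrank K C' = 1)
    (hX : Module.finrank K X = 1) (hY : Module.finrank K Y = 1)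
    (hZ : Module.finrank K Z = 1)
    (hABC : ¬ Collinear3 A B C) (hA'B'C' : ¬ Collinear3 A' B' C')
    (hAA' : A ≠ A') (hBB' : B ≠ B') (hCC' : C ≠ C')
    (hl1 : A ⊔ A' ≠ B ⊔ B') (hl2 : A ⊔ A' ≠ C ⊔ C') (hl3 : B ⊔ B' ≠ C ⊔ C')
    (hAB : A ⊔ B ≠ A' ⊔ B') (hAC : A ⊔ C ≠ A' ⊔ C') (hBC : B ⊔ C ≠ B' ⊔ C')
    (hXon : X ≤ A ⊔ B ∧ X ≤ A' ⊔ B')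
    (hYon : Y ≤ A ⊔ C ∧ Y ≤ A' ⊔ C')
    (hZon : Z ≤ B ⊔ C ∧ Z ≤ B' ⊔ C')
    (hcol : Collinear3 X Y Z) :
    ∃ P : Submodule K (Fin 3 → K), Module.finrank K P = 1 ∧
      P ≤ A ⊔ A' ∧ P ≤ B ⊔ B' ∧ P ≤ C ⊔ C' := by
  obtain ⟨a, ha0, hAa⟩ := exists_gen A hA
  obtain ⟨b, hb0, hBb⟩ := exists_gen B hB
  obtain ⟨c, hc0, hCc⟩ := exists_gen C hC
  obtain ⟨a', ha'0, hA'a⟩ := exists_gen A' hA'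
  obtain ⟨b', hb'0, hB'b⟩ := exists_gen B' hB'
  obtain ⟨c', hc'0, hC'c⟩ := exists_gen C' hC'
  obtain ⟨x, hx0, hXx⟩ := exists_gen X hX
  obtain ⟨y, hy0, hYy⟩ := exists_gen Y hY
  obtain ⟨z, hz0, hZz⟩ := exists_gen Z hZ
  have hxX : x ∈ X := hXx ▸ Submodule.mem_span_singleton_self x
  have hyY : y ∈ Y := hYy ▸ Submodule.mem_span_singleton_self y
  have hzZ : z ∈ Z := hZz ▸ Submodule.mem_span_singleton_self z
  have haA : a ∈ A := hAa ▸ Submodule.mem_span_singleton_self a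
  have hbB : b ∈ B := hBb ▸ Submodule.mem_span_singleton_self b
  have hcC : c ∈ C := hCc ▸ Submodule.mem_span_singleton_self c
  have ha'A : a' ∈ A' := hA'a ▸ Submodule.mem_span_singleton_self a'
  have hb'B : b' ∈ B' := hB'b ▸ Submodule.mem_span_singleton_self b'
  have hc'C : c' ∈ C' := hC'c ▸ Submodule.mem_span_singleton_self c'
  obtain ⟨s, t, hx1⟩ := decomp hAa hBb (hXon.1 hxX)
  obtain ⟨s', t', hx2⟩ := decomp hA'a hB'b (hXon.2 hxX)
  obtain ⟨u, v, hy1⟩ := decomp hAa hCc (hYon.1 hyY)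
  obtain ⟨u', v', hy2⟩ := decomp hA'a hC'c (hYon.2 hyY)
  obtain ⟨p, q, hz1⟩ := decomp hBb hCc (hZon.1 hzZ)
  obtain ⟨p', q', hz2⟩ := decomp hB'b hC'c (hZon.2 hzZ)
  -- nontrivial dependence of x, y, z
  obtain ⟨W, hW2, hXW, hYW, hZW⟩ := hcol
  have hdep : ¬ LinearIndependent K ![x, y, z] := by
    intro hLI
    have hsub : Submodule.span K (Set.range ![x, y, z]) ≤ W := by
      rw [Submodule.span_le]
      rintro w ⟨i, rfl⟩
      fin_cases i
      · exact hXW hxX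
      · exact hYW hyY
      · exact hZW hzZ
    have hle := Submodule.finrank_mono hsub
    rw [finrank_span_eq_card hLI, hW2] at hle
    simp at hle
  obtain ⟨g, hg, i, hgi⟩ := Fintype.not_linearIndependent_iff.mp hdep
  set l := g 0 with hldef
  set m := g 1 with hmdef
  set n := g 2 with hndef
  have hrel : l • x + m • y + n • z = 0 := by
    simpa [Fin.sum_univ_three] using hg
  have eqx1 : l • x = (l * s) • a + (l * t) • b := by rw [hx1, smul_add, mul_smul, mul_smul]
  have eqx2 : l • x = (l * s') • a' + (l * t') • b' := by rw [hx2, smul_add, mul_smul, mul_smul]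
  have eqy1 : m • y = (m * u) • a + (m * v) • c := by rw [hy1, smul_add, mul_smul, mul_smul]
  have eqy2 : m • y = (m * u') • a' + (m * v') • c' := by rw [hy2, smul_add, mul_smul, mul_smul]
  have eqz1 : n • z = (n * p) • b + (n * q) • c := by rw [hz1, smul_add, mul_smul, mul_smul]
  have eqz2 : n • z = (n * p') • b' + (n * q') • c' := by rw [hz2, smul_add, mul_smul, mul_smul]
  have hrel1 : (l * s + m * u) • a + (l * t + n * p) • b + (m * v + n * q) • c = 0 := by
    have e : (l * s + m * u) • a + (l * t + n * p) • b + (m * v + n * q) • c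
        = l • x + m • y + n • z := by
      rw [eqx1, eqy1, eqz1, add_smul, add_smul, add_smul]; abel
    rw [e]; exact hrel
  have hrel2 : (l * s' + m * u') • a' + (l * t' + n * p') • b' + (m * v' + n * q') • c' = 0 := by
    have e : (l * s' + m * u') • a' + (l * t' + n * p') • b' + (m * v' + n * q') • c'
        = l • x + m • y + n • z := by
      rw [eqx2, eqy2, eqz2, add_smul, add_smul, add_smul]; abel
    rw [e]; exact hrel
  obtain ⟨e1, e2, e3⟩ := indep3 hABC hAa hBb hCc ha0 hb0 hrel1
  obtain ⟨e1', e2', e3'⟩ := indep3 hA'B'C' hA'a hB'b hC'c ha'0 hb'0 hrel2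
  set w : Fin 3 → K := (l * s) • a - (l * s') • a' with hwdef
  have wB : w = (l * t') • b' - (l * t) • b := by
    have exx : (l * s) • a + (l * t) • b = (l * s') • a' + (l * t') • b' := by
      rw [← eqx1, ← eqx2]
    have e : (l * s) • a = (l * s') • a' + (l * t') • b' - (l * t) • b := eq_sub_of_add_eq exx
    rw [hwdef, e]; abel
  have wC : w = (m * v) • c - (m * v') • c' := by
    have hls : (l * s : K) = -(m * u) := (neg_eq_of_add_eq_zero_left e1).symm
    have hls' : (l * s' : K) = -(m * u') := (neg_eq_of_add_eq_zero_left e1').symm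
    have eya : (m * u) • a = m • y - (m * v) • c := eq_sub_of_add_eq eqy1.symm
    have eya' : (m * u') • a' = m • y - (m * v') • c' := eq_sub_of_add_eq eqy2.symm
    rw [hwdef, hls, hls', neg_smul, neg_smul, eya, eya']; abel
  have hwAA : w ∈ A ⊔ A' := Submodule.sub_mem _
    (Submodule.mem_sup_left (Submodule.smul_mem _ _ haA))
    (Submodule.mem_sup_right (Submodule.smul_mem _ _ ha'A))
  have hwBB : w ∈ B ⊔ B' := by
    rw [wB]
    exact Submodule.sub_mem _
      (Submodule.mem_sup_right (Submodule.smul_mem _ _ hb'B))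
      (Submodule.mem_sup_left (Submodule.smul_mem _ _ hbB))
  have hwCC : w ∈ C ⊔ C' := by
    rw [wC]
    exact Submodule.sub_mem _
      (Submodule.mem_sup_left (Submodule.smul_mem _ _ hcC))
      (Submodule.mem_sup_right (Submodule.smul_mem _ _ hc'C))
  have hw0 : w ≠ 0 := by
    intro hw
    have hwB0 : (l * t') • b' - (l * t) • b = 0 := by rw [← wB]; exact hw
    have hwC0 : (m * v) • c - (m * v') • c' = 0 := by rw [← wC]; exact hw
    have p1 := indep2 hAA' hAa hA'a ha0 ha'0 (c := l * s) (d := -(l * s'))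
      (by rw [neg_smul, ← sub_eq_add_neg]; exact hwdef ▸ hw)
    have p2 := indep2 hBB' hBb hB'b hb0 hb'0 (c := -(l * t)) (d := l * t')
      (by rw [neg_smul, neg_add_eq_sub]; exact hwB0)
    have p3 := indep2 hCC' hCc hC'c hc0 hc'0 (c := m * v) (d := -(m * v'))
      (by rw [neg_smul, ← sub_eq_add_neg]; exact hwC0)
    have hls0 : l * s = 0 := p1.1
    have hls'0 : l * s' = 0 := neg_eq_zero.mp p1.2
    have hlt0 : l * t = 0 := neg_eq_zero.mp p2.1
    have hmv0 : m * v = 0 := p3.1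
    have hmu0 : m * u = 0 := by have := e1; rw [hls0, zero_add] at this; exact this
    rcases eq_or_ne l 0 with hl | hl
    · rcases eq_or_ne m 0 with hm | hm
      · have hnz : n • z = 0 := by
          have := hrel; rw [hl, hm, zero_smul, zero_smul, zero_add, zero_add] at this
          exact this
        have hn : n = 0 := (smul_eq_zero.mp hnz).resolve_right hz0
        fin_cases i
        · exact hgi (hldef.symm.trans hl)
        · exact hgi (hmdef.symm.trans hm)
        · exact hgi (hndef.symm.trans hn)
      · have hu : u = 0 := (mul_eq_zero.mp hmu0).resolve_left hm
        have hv : v = 0 := (mul_eq_zero.mp hmv0).resolve_left hm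
        exact hy0 (by rw [hy1, hu, hv, zero_smul, zero_smul, add_zero])
    · have hs : s = 0 := (mul_eq_zero.mp hls0).resolve_left hl
      have ht : t = 0 := (mul_eq_zero.mp hlt0).resolve_left hl
      exact hx0 (by rw [hx1, hs, ht, zero_smul, zero_smul, add_zero])
  refine ⟨Submodule.span K {w}, finrank_span_singleton hw0, ?_, ?_, ?_⟩ <;>
    rw [Submodule.span_singleton_le_iff_mem]
  · exact hwAA
  · exact hwBB
  · exact hwCC
end

section
/- (Common transversals of three pairwise skew lines.) Let K be a division ring and let a, b, c be pairwise skew lines of ℙ³(K). Then: (i) any two distinct common transversals of a, b, c are skew to each other; (ii) if K is infinite, then the set of common transversals of a, b, c is infinite. -/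
/-!
Two common transversals that meet span a proper subspace `π`. Two skew lines of `ℙ³` span the
whole space, so at most one of `a`, `b`, `c` lies in `π`; each of the other two meets `π` in a
single point, and both transversals must be the line joining these two points.

Since `a ⊕ b = V`, through every point `u` of `c` passes a common transversal: the line joining
the components of `u` in `a` and in `b`. No transversal contains `c`, because `c` misses `a`.
So finitely many transversals would cover `c` by finitely many proper subspaces, which is
impossible over an infinite division ring.
-/

/-- A line `t` of `ℙ³(K)` is a common transversal of the lines `a`, `b`, `c` if it meets each
of them in a nonzero subspace. -/
def IsCommonTransversal {K : Type*} [DivisionRing K]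
    (t a b c : Submodule K (Fin 4 → K)) : Prop :=
  t ⊓ a ≠ ⊥ ∧ t ⊓ b ≠ ⊥ ∧ t ⊓ c ≠ ⊥

open Module

namespace Submodule

variable {K V : Type*} [DivisionRing K] [AddCommGroup V] [Module K V]

theorem inf_eq_bot_iff_sup_eq_top [FiniteDimensional K V] {x y : Submodule K V}
    (h : finrank K x + finrank K y = finrank K V) : x ⊓ y = ⊥ ↔ x ⊔ y = ⊤ := by
  rw [← finrank_eq_zero, eq_top_iff_finrank_eq]
  have := finrank_sup_add_finrank_inf_eq x y
  omega

theorem inf_eq_inf_of_le_of_not_le [FiniteDimensional K V] {t π x : Submodule K V}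
    (hx : finrank K x ≤ 2) (hxπ : ¬x ≤ π) (htπ : t ≤ π) (htx : t ⊓ x ≠ ⊥) :
    t ⊓ x = π ⊓ x := by
  refine eq_of_le_of_finrank_le (inf_le_inf_right x htπ) ?_
  have hπx : finrank K ↥(π ⊓ x) < finrank K x := finrank_lt_finrank_of_lt (inf_lt_right.mpr hxπ)
  have htx' : 1 ≤ finrank K ↥(t ⊓ x) := one_le_finrank_iff.mpr htx
  omega

theorem sup_eq_of_le_of_inf_eq_bot [FiniteDimensional K V] {t P Q : Submodule K V}
    (ht : finrank K t ≤ 2) (hPt : P ≤ t) (hQt : Q ≤ t) (hP : P ≠ ⊥) (hQ : Q ≠ ⊥)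
    (hPQ : P ⊓ Q = ⊥) : P ⊔ Q = t := by
  refine eq_of_le_of_finrank_le (sup_le hPt hQt) ?_
  have := finrank_sup_add_finrank_inf_eq P Q
  rw [hPQ, finrank_bot] at this
  have := one_le_finrank_iff.mpr hP
  have := one_le_finrank_iff.mpr hQ
  omega

theorem eq_sup_inf_of_le [FiniteDimensional K V] {π t x y : Submodule K V}
    (ht : finrank K t ≤ 2) (hx : finrank K x ≤ 2) (hy : finrank K y ≤ 2) (hxy : x ⊓ y = ⊥)
    (hxπ : ¬x ≤ π) (hyπ : ¬y ≤ π) (htπ : t ≤ π) (htx : t ⊓ x ≠ ⊥) (hty : t ⊓ y ≠ ⊥) :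
    t = π ⊓ x ⊔ π ⊓ y := by
  rw [← inf_eq_inf_of_le_of_not_le hx hxπ htπ htx, ← inf_eq_inf_of_le_of_not_le hy hyπ htπ hty]
  refine (sup_eq_of_le_of_inf_eq_bot ht inf_le_left inf_le_left htx hty ?_).symm
  exact disjoint_iff.mp ((disjoint_iff.mpr hxy).mono inf_le_right inf_le_right)

theorem not_le_of_inf_ne_bot [FiniteDimensional K V] {a c t : Submodule K V}
    (h : finrank K t ≤ finrank K c) (hac : a ⊓ c = ⊥) (hta : t ⊓ a ≠ ⊥) : ¬c ≤ t :=
  fun hct => hta (by rw [← eq_of_le_of_finrank_le hct h, inf_comm, hac])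

theorem exists_finrank_eq_two_mem_inf_ne_bot {a b : Submodule K V} (hab : a ⊓ b = ⊥)
    (hab' : a ⊔ b = ⊤) {u : V} (hua : u ∉ a) (hub : u ∉ b) :
    ∃ t : Submodule K V, finrank K t = 2 ∧ u ∈ t ∧ t ⊓ a ≠ ⊥ ∧ t ⊓ b ≠ ⊥ := by
  obtain ⟨p, hpa, q, hqb, rfl⟩ := mem_sup.mp (hab' ▸ mem_top : u ∈ a ⊔ b)
  have hp : p ≠ 0 := fun h => hub (by rwa [h, zero_add])
  have hq : q ≠ 0 := fun h => hua (by rwa [h, add_zero])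
  have hpq : (K ∙ p) ⊓ (K ∙ q) = ⊥ := by
    rw [← le_bot_iff, ← hab]
    exact inf_le_inf ((span_singleton_le_iff_mem p a).mpr hpa)
      ((span_singleton_le_iff_mem q b).mpr hqb)
  have hpt : p ∈ (K ∙ p) ⊔ (K ∙ q) := mem_sup_left (mem_span_singleton_self p)
  have hqt : q ∈ (K ∙ p) ⊔ (K ∙ q) := mem_sup_right (mem_span_singleton_self q)
  refine ⟨(K ∙ p) ⊔ (K ∙ q), ?_, add_mem hpt hqt,
    (Submodule.ne_bot_iff _).mpr ⟨p, ⟨hpt, hpa⟩, hp⟩,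
    (Submodule.ne_bot_iff _).mpr ⟨q, ⟨hqt, hqb⟩, hq⟩⟩
  have := finrank_sup_add_finrank_inf_eq (K ∙ p) (K ∙ q)
  rw [hpq, finrank_bot, finrank_span_singleton hp, finrank_span_singleton hq] at this
  omega

end Submodule

open Submodule

section ProjectiveThreeSpace

variable {K : Type*} [DivisionRing K] {a b c : Submodule K (Fin 4 → K)}

theorem inf_eq_bot_iff_sup_eq_top_of_finrank_eq_two {x y : Submodule K (Fin 4 → K)}
    (hx : finrank K x = 2) (hy : finrank K y = 2) : x ⊓ y = ⊥ ↔ x ⊔ y = ⊤ :=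
  inf_eq_bot_iff_sup_eq_top (V := Fin 4 → K) (by rw [hx, hy, finrank_fin_fun])

theorem IsCommonTransversal.eq_of_le (ha : finrank K a = 2) (hb : finrank K b = 2)
    (hc : finrank K c = 2) (hab : a ⊓ b = ⊥) (hac : a ⊓ c = ⊥) (hbc : b ⊓ c = ⊥)
    {π t t' : Submodule K (Fin 4 → K)} (hπ : π ≠ ⊤) (ht : finrank K t = 2)
    (ht' : finrank K t' = 2) (htπ : t ≤ π) (ht'π : t' ≤ π)
    (hT : IsCommonTransversal t a b c) (hT' : IsCommonTransversal t' a b c) : t = t' := by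
  have not_le_of_le {x y : Submodule K (Fin 4 → K)} (hx : finrank K x = 2)
      (hy : finrank K y = 2) (hxy : x ⊓ y = ⊥) (hxπ : x ≤ π) : ¬y ≤ π := fun hyπ => by
    rw [inf_eq_bot_iff_sup_eq_top_of_finrank_eq_two hx hy] at hxy
    exact hπ (top_le_iff.mp (hxy ▸ sup_le hxπ hyπ))
  have eq_of_meet {x y : Submodule K (Fin 4 → K)} (hx : finrank K x = 2)
      (hy : finrank K y = 2) (hxy : x ⊓ y = ⊥) (hxπ : ¬x ≤ π) (hyπ : ¬y ≤ π)
      (htx : t ⊓ x ≠ ⊥) (hty : t ⊓ y ≠ ⊥) (ht'x : t' ⊓ x ≠ ⊥) (ht'y : t' ⊓ y ≠ ⊥) : t = t' :=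
    (eq_sup_inf_of_le ht.le hx.le hy.le hxy hxπ hyπ htπ htx hty).trans
      (eq_sup_inf_of_le ht'.le hx.le hy.le hxy hxπ hyπ ht'π ht'x ht'y).symm
  obtain ⟨hta, htb, htc⟩ := hT
  obtain ⟨ht'a, ht'b, ht'c⟩ := hT'
  by_cases haπ : a ≤ π
  · exact eq_of_meet hb hc hbc (not_le_of_le ha hb hab haπ) (not_le_of_le ha hc hac haπ)
      htb htc ht'b ht'c
  by_cases hbπ : b ≤ π
  · exact eq_of_meet ha hc hac haπ (not_le_of_le hb hc hbc hbπ) hta htc ht'a ht'c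
  · exact eq_of_meet ha hb hab haπ hbπ hta htb ht'a ht'b

theorem exists_isCommonTransversal_mem (ha : finrank K a = 2) (hb : finrank K b = 2)
    (hab : a ⊓ b = ⊥) (hac : a ⊓ c = ⊥) (hbc : b ⊓ c = ⊥) {u : Fin 4 → K} (huc : u ∈ c)
    (hu : u ≠ 0) :
    ∃ t : Submodule K (Fin 4 → K), (finrank K t = 2 ∧ IsCommonTransversal t a b c) ∧ u ∈ t := by
  have hab' := (inf_eq_bot_iff_sup_eq_top_of_finrank_eq_two ha hb).mp hab
  have not_mem {x : Submodule K (Fin 4 → K)} (hxc : x ⊓ c = ⊥) : u ∉ x := fun hux =>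
    hu ((mem_bot K).mp (hxc ▸ mem_inf.mpr ⟨hux, huc⟩))
  obtain ⟨t, ht, hut, hta, htb⟩ :=
    exists_finrank_eq_two_mem_inf_ne_bot hab hab' (not_mem hac) (not_mem hbc)
  exact ⟨t, ⟨ht, hta, htb, (Submodule.ne_bot_iff _).mpr ⟨u, mem_inf.mpr ⟨hut, huc⟩, hu⟩⟩, hut⟩

theorem infinite_setOf_isCommonTransversal [Infinite K] (ha : finrank K a = 2)
    (hb : finrank K b = 2) (hc : finrank K c = 2) (hab : a ⊓ b = ⊥) (hac : a ⊓ c = ⊥)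
    (hbc : b ⊓ c = ⊥) :
    {t : Submodule K (Fin 4 → K) | finrank K t = 2 ∧ IsCommonTransversal t a b c}.Infinite := by
  intro hfin
  have := hfin.to_subtype
  obtain ⟨u, huc, hu⟩ := exists_mem_ne_zero_of_ne_bot (one_le_finrank_iff.mp (by omega) : c ≠ ⊥)
  have hcover :
      ⋃ t : {t : Submodule K (Fin 4 → K) | finrank K t = 2 ∧ IsCommonTransversal t a b c},
      (comap c.subtype t.1 : Set c) = Set.univ := by
    refine Set.eq_univ_of_forall fun x => Set.mem_iUnion.mpr ?_
    by_cases hx : (x : Fin 4 → K) = 0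
    · obtain ⟨t, hT, -⟩ := exists_isCommonTransversal_mem ha hb hab hac hbc huc hu
      exact ⟨⟨t, hT⟩, by simp [hx]⟩
    · obtain ⟨t, hT, hxt⟩ := exists_isCommonTransversal_mem ha hb hab hac hbc x.2 hx
      exact ⟨⟨t, hT⟩, hxt⟩
  obtain ⟨⟨t, ht, hT⟩, htop⟩ := Subspace.exists_eq_top_of_iUnion_eq_univ hcover
  exact not_le_of_inf_ne_bot (ht.trans hc.symm).le hac hT.1 (comap_subtype_eq_top.mp htop)

end ProjectiveThreeSpace

/-- Common transversals of three pairwise skew lines of `ℙ³(K)`: (i) any two distinct common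
transversals are skew; (ii) if `K` is infinite, there are infinitely many common
transversals. -/
theorem common_transversals_of_skew_lines {K : Type*} [DivisionRing K]
    (a b c : Submodule K (Fin 4 → K))
    (ha : Module.finrank K a = 2) (hb : Module.finrank K b = 2)
    (hc : Module.finrank K c = 2)
    (hab : a ⊓ b = ⊥) (hac : a ⊓ c = ⊥) (hbc : b ⊓ c = ⊥) :
    (∀ t t' : Submodule K (Fin 4 → K),
        Module.finrank K t = 2 → Module.finrank K t' = 2 →
        IsCommonTransversal t a b c → IsCommonTransversal t' a b c →
        t ≠ t' → t ⊓ t' = ⊥) ∧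
    (Infinite K →
      {t : Submodule K (Fin 4 → K) |
        Module.finrank K t = 2 ∧ IsCommonTransversal t a b c}.Infinite) := by
  refine ⟨fun t t' ht ht' hT hT' hne => ?_, fun _ =>
    infinite_setOf_isCommonTransversal ha hb hc hab hac hbc⟩
  by_contra hmeet
  have hπ : t ⊔ t' ≠ ⊤ :=
    (inf_eq_bot_iff_sup_eq_top_of_finrank_eq_two ht ht').not.mp hmeet
  exact hne (hT.eq_of_le ha hb hc hab hac hbc hπ ht ht' le_sup_left le_sup_right hT')
end

section
/- (Gallucci's theorem.) Let K be a field (commutative). Let a, b, c be pairwise skew lines of ℙ³(K) and let e, f, g be pairwise skew lines of ℙ³(K) such that each of e, f, g meets each of a, b, c (all nine intersections are nonzero subspaces). Then every line h that meets all of a, b, c also meets every line d that meets all of e, f, g; that is, for any common transversal h of {a,b,c} and any common transversal d of {e,f,g}, we have h ∩ d ≠ 0. -/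
/-!
Pick `P, Q ∈ a` and `P', Q' ∈ b` with `e = ⟨P, P'⟩`, `f = ⟨Q, Q'⟩` and `P + P', Q + Q' ∈ c`.
These four vectors are independent, so they identify `K² ⊗ K²` (as `2 × 2` matrices) with a
subspace of `V`. In these coordinates `a`, `b`, `c` are the lines `u ⊗ K²` for
`u = (1, 0), (0, 1), (1, 1)`, and `e`, `f` are the lines `K² ⊗ w` for `w = (1, 0), (0, 1)`.
If a line `⟨x, y⟩` has `x = e₀ ⊗ w₀`, `y = e₁ ⊗ w₁` and `x + y = u ⊗ w`, comparing rows gives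
`w₀ = u₀ w`, `w₁ = u₁ w`, so the line is `K² ⊗ w`. Hence `g` and `h` are lines `K² ⊗ w`, and by
the symmetry `u ⊗ w ↦ w ⊗ u`, `d` is a line `u ⊗ K²`; two such lines meet in `u ⊗ w ≠ 0`.
-/

section Gallucci

open Module Submodule Matrix Function

variable {K V : Type*} [Field K] [AddCommGroup V] [Module K V]

namespace Submodule

variable {a b c t : Submodule K V}

theorem eq_zero_and_eq_zero_of_add_eq_zero (hab : a ⊓ b = ⊥) {x y : V} (hx : x ∈ a)
    (hy : y ∈ b) (hxy : x + y = 0) : x = 0 ∧ y = 0 := by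
  have hx0 : x = 0 := by
    have : x ∈ a ⊓ b := ⟨hx, by rw [eq_neg_of_add_eq_zero_left hxy]; exact b.neg_mem hy⟩
    rwa [hab, mem_bot] at this
  exact ⟨hx0, by rwa [hx0, zero_add] at hxy⟩

theorem linearIndependent_pair_of_inf_eq_bot (hab : a ⊓ b = ⊥) {x y : V} (hx : x ∈ a)
    (hy : y ∈ b) (hx0 : x ≠ 0) (hy0 : y ≠ 0) : LinearIndependent K ![x, y] :=
  LinearIndependent.pair_iff.2 fun s r hsr => by
    obtain ⟨hs, hr⟩ :=
      eq_zero_and_eq_zero_of_add_eq_zero hab (a.smul_mem s hx) (b.smul_mem r hy) hsr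
    exact ⟨(smul_eq_zero.1 hs).resolve_right hx0, (smul_eq_zero.1 hr).resolve_right hy0⟩

theorem eq_span_pair_of_inf_eq_bot (ht : finrank K t = 2) (hab : a ⊓ b = ⊥) {x y : V}
    (hx : x ∈ t ⊓ a) (hy : y ∈ t ⊓ b) (hx0 : x ≠ 0) (hy0 : y ≠ 0) : t = span K {x, y} := by
  have : FiniteDimensional K t := Module.finite_of_finrank_pos (by omega)
  have hspan : finrank K (span K {x, y}) = 2 := by
    have := finrank_span_eq_card (linearIndependent_pair_of_inf_eq_bot hab hx.2 hy.2 hx0 hy0)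
    rwa [Matrix.range_cons_cons_empty, Fintype.card_fin] at this
  refine (eq_of_le_of_finrank_le (span_le.2 ?_) (ht.trans hspan.symm).le).symm
  rintro z (rfl | rfl)
  exacts [hx.1, hy.1]

theorem exists_add_mem_of_inf_ne_bot (ht : finrank K t = 2) (hab : a ⊓ b = ⊥)
    (hac : a ⊓ c = ⊥) (hbc : b ⊓ c = ⊥) (hta : t ⊓ a ≠ ⊥) (htb : t ⊓ b ≠ ⊥)
    (htc : t ⊓ c ≠ ⊥) :
    ∃ x ∈ a, ∃ y ∈ b, x ≠ 0 ∧ y ≠ 0 ∧ x + y ∈ c ∧ t = span K {x, y} := by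
  obtain ⟨p, hp, hp0⟩ := (Submodule.ne_bot_iff _).1 hta
  obtain ⟨q, hq, hq0⟩ := (Submodule.ne_bot_iff _).1 htb
  obtain ⟨z, hz, hz0⟩ := (Submodule.ne_bot_iff _).1 htc
  obtain ⟨s, r, rfl⟩ := mem_span_pair.1 (eq_span_pair_of_inf_eq_bot ht hab hp hq hp0 hq0 ▸ hz.1)
  have hsp : s • p ≠ 0 := by
    intro h0
    rw [h0, zero_add] at hz hz0
    exact hz0 (by simpa [hbc] using mem_inf.2 ⟨b.smul_mem r hq.2, hz.2⟩)
  have hrq : r • q ≠ 0 := by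
    intro h0
    rw [h0, add_zero] at hz hz0
    exact hz0 (by simpa [hac] using mem_inf.2 ⟨a.smul_mem s hp.2, hz.2⟩)
  exact ⟨_, a.smul_mem s hp.2, _, b.smul_mem r hq.2, hsp, hrq, hz.2,
    eq_span_pair_of_inf_eq_bot ht hab ⟨t.smul_mem s hp.1, a.smul_mem s hp.2⟩
      ⟨t.smul_mem r hq.1, b.smul_mem r hq.2⟩ hsp hrq⟩

end Submodule

namespace Matrix

variable {m n : Type*} [Fintype m] [Fintype n]

def linearCombination (v : Matrix m n V) : Matrix m n K →ₗ[K] V where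
  toFun M := ∑ i, ∑ j, M i j • v i j
  map_add' M N := by simp only [Matrix.add_apply, add_smul, Finset.sum_add_distrib]
  map_smul' r M := by
    simp only [Matrix.smul_apply, smul_eq_mul, mul_smul, Finset.smul_sum, RingHom.id_apply]

theorem linearCombination_vecMulVec (v : Matrix m n V) (u : m → K) (w : n → K) :
    linearCombination v (vecMulVec u w) = ∑ i, u i • ∑ j, w j • v i j := by
  simp [linearCombination, vecMulVec_apply, mul_smul, Finset.smul_sum]

end Matrix

namespace Segre

variable (ι : Matrix (Fin 2) (Fin 2) K →ₗ[K] V)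

/- Through `ι`, the lines `u ⊗ K²` and `K² ⊗ w` of `K² ⊗ K²`, i.e. the two rulings of the
quadric of rank-one tensors. -/

def rowLine (u : Fin 2 → K) : Submodule K V :=
  LinearMap.range (ι ∘ₗ vecMulVecBilin K K u)

def colLine (w : Fin 2 → K) : Submodule K V :=
  LinearMap.range (ι ∘ₗ (vecMulVecBilin K K).flip w)

variable {ι}

instance (w : Fin 2 → K) : FiniteDimensional K (colLine ι w) :=
  LinearMap.finiteDimensional_range _

theorem vecMulVec_mem_rowLine (u w : Fin 2 → K) : ι (vecMulVec u w) ∈ rowLine ι u := ⟨w, rfl⟩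

theorem vecMulVec_mem_colLine (u w : Fin 2 → K) : ι (vecMulVec u w) ∈ colLine ι w := ⟨u, rfl⟩

theorem rowLine_transpose (w : Fin 2 → K) :
    rowLine (ι ∘ₗ (transposeLinearEquiv (Fin 2) (Fin 2) K K).toLinearMap) w = colLine ι w := by
  unfold rowLine colLine
  congr 1
  exact LinearMap.ext fun u => by simp [transpose_vecMulVec]

theorem colLine_transpose (u : Fin 2 → K) :
    colLine (ι ∘ₗ (transposeLinearEquiv (Fin 2) (Fin 2) K K).toLinearMap) u = rowLine ι u := by
  unfold rowLine colLine
  congr 1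
  exact LinearMap.ext fun w => by simp [transpose_vecMulVec]

theorem injective_comp_transpose (hι : Injective ι) :
    Injective (ι ∘ₗ (transposeLinearEquiv (Fin 2) (Fin 2) K K).toLinearMap) := by
  rw [LinearMap.coe_comp]
  exact hι.comp (transposeLinearEquiv _ _ K K).injective

theorem finrank_colLine_le (w : Fin 2 → K) : finrank K (colLine ι w) ≤ 2 :=
  (LinearMap.finrank_range_le _).trans_eq (by simp)

theorem rowLine_inf_colLine_ne_bot (hι : Injective ι) {u w : Fin 2 → K} (hu : u ≠ 0)
    (hw : w ≠ 0) : rowLine ι u ⊓ colLine ι w ≠ ⊥ :=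
  (Submodule.ne_bot_iff _).2 ⟨_, ⟨vecMulVec_mem_rowLine u w, vecMulVec_mem_colLine u w⟩,
    (map_ne_zero_iff ι hι).2 (vecMulVec_ne_zero hu hw)⟩

theorem eq_rowLine_of_forall_mem (hι : Injective ι) {u : Fin 2 → K} (hu : u ≠ 0)
    {t : Submodule K V} (ht : finrank K t = 2) (h : ∀ w, ι (vecMulVec u w) ∈ t) :
    t = rowLine ι u := by
  have : FiniteDimensional K t := Module.finite_of_finrank_pos (by omega)
  have hinj : Injective (vecMulVecBilin K K u) := (injective_iff_map_eq_zero _).2 fun w hw =>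
    (vecMulVec_eq_zero.1 hw).resolve_left hu
  refine (eq_of_le_of_finrank_le (by rintro _ ⟨w, rfl⟩; exact h w) ?_).symm
  rw [ht, rowLine, LinearMap.finrank_range_of_inj (f := ι ∘ₗ _) (hι.comp hinj), finrank_fin_fun]

theorem eq_colLine_of_forall_mem (hι : Injective ι) {w : Fin 2 → K} (hw : w ≠ 0)
    {t : Submodule K V} (ht : finrank K t = 2) (h : ∀ u, ι (vecMulVec u w) ∈ t) :
    t = colLine ι w := by
  rw [← rowLine_transpose]
  exact eq_rowLine_of_forall_mem (injective_comp_transpose hι) hw ht fun u => by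
    simpa [transpose_vecMulVec] using h u

theorem exists_eq_colLine_of_inf_ne_bot (hι : Injective ι) {u : Fin 2 → K}
    (h01 : rowLine ι (Pi.single 0 1) ⊓ rowLine ι (Pi.single 1 1) = ⊥)
    (h0 : rowLine ι (Pi.single 0 1) ⊓ rowLine ι u = ⊥)
    (h1 : rowLine ι (Pi.single 1 1) ⊓ rowLine ι u = ⊥) {t : Submodule K V}
    (ht : finrank K t = 2) (ht0 : t ⊓ rowLine ι (Pi.single 0 1) ≠ ⊥)
    (ht1 : t ⊓ rowLine ι (Pi.single 1 1) ≠ ⊥) (htu : t ⊓ rowLine ι u ≠ ⊥) :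
    ∃ w ≠ 0, t = colLine ι w := by
  obtain ⟨_, ⟨w₀, rfl⟩, _, ⟨w₁, rfl⟩, hx0, -, ⟨w, hw⟩, rfl⟩ :=
    exists_add_mem_of_inf_ne_bot ht h01 h0 h1 ht0 ht1 htu
  have hrows : vecMulVec u w =
      vecMulVec (Pi.single 0 1) w₀ + vecMulVec (Pi.single 1 1) w₁ := hι (by simpa using hw)
  obtain rfl : w₀ = u 0 • w := by
    ext j; simpa [vecMulVec_apply] using (congrFun (congrFun hrows 0) j).symm
  obtain rfl : w₁ = u 1 • w := by
    ext j; simpa [vecMulVec_apply] using (congrFun (congrFun hrows 1) j).symm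
  refine ⟨w, by rintro rfl; simp at hx0,
    eq_of_le_of_finrank_le (span_le.2 ?_) ((finrank_colLine_le w).trans ht.ge)⟩
  rintro _ (rfl | rfl) <;>
    simpa [vecMulVec_smul] using smul_mem _ _ (vecMulVec_mem_colLine _ w)

theorem exists_injective_rowLine_colLine {a b c e f : Submodule K V}
    (ha : finrank K a = 2) (hb : finrank K b = 2) (hc : finrank K c = 2)
    (he : finrank K e = 2) (hf : finrank K f = 2)
    (hab : a ⊓ b = ⊥) (hac : a ⊓ c = ⊥) (hbc : b ⊓ c = ⊥) (hef : e ⊓ f = ⊥)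
    (hea : e ⊓ a ≠ ⊥) (heb : e ⊓ b ≠ ⊥) (hec : e ⊓ c ≠ ⊥)
    (hfa : f ⊓ a ≠ ⊥) (hfb : f ⊓ b ≠ ⊥) (hfc : f ⊓ c ≠ ⊥) :
    ∃ ι : Matrix (Fin 2) (Fin 2) K →ₗ[K] V, Injective ι ∧
      a = rowLine ι (Pi.single 0 1) ∧ b = rowLine ι (Pi.single 1 1) ∧ c = rowLine ι 1 ∧
      e = colLine ι (Pi.single 0 1) ∧ f = colLine ι (Pi.single 1 1) := by
  obtain ⟨P, hPa, P', hP'b, hP0, hP'0, hPc, rfl⟩ :=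
    exists_add_mem_of_inf_ne_bot he hab hac hbc hea heb hec
  obtain ⟨Q, hQa, Q', hQ'b, hQ0, hQ'0, hQc, rfl⟩ :=
    exists_add_mem_of_inf_ne_bot hf hab hac hbc hfa hfb hfc
  have hι : Injective (linearCombination (K := K) !![P, Q; P', Q']) := by
    refine (injective_iff_map_eq_zero _).2 fun M hM => ?_
    have hsum : (M 0 0 • P + M 1 0 • P') + (M 0 1 • Q + M 1 1 • Q') = 0 := by
      rw [← hM]
      simp only [linearCombination, LinearMap.coe_mk, AddHom.coe_mk, Fin.sum_univ_two, of_apply,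
        cons_val', cons_val_zero, cons_val_one, cons_val_fin_one]
      abel
    obtain ⟨hPP', hQQ'⟩ := eq_zero_and_eq_zero_of_add_eq_zero hef
      (mem_span_pair.2 ⟨_, _, rfl⟩) (mem_span_pair.2 ⟨_, _, rfl⟩) hsum
    obtain ⟨h00, h10⟩ := LinearIndependent.pair_iff.1
      (linearIndependent_pair_of_inf_eq_bot hab hPa hP'b hP0 hP'0) _ _ hPP'
    obtain ⟨h01, h11⟩ := LinearIndependent.pair_iff.1
      (linearIndependent_pair_of_inf_eq_bot hab hQa hQ'b hQ0 hQ'0) _ _ hQQ'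
    ext i j
    fin_cases i <;> fin_cases j <;> assumption
  refine ⟨_, hι, eq_rowLine_of_forall_mem hι (by simp) ha fun w => ?_,
    eq_rowLine_of_forall_mem hι (by simp) hb fun w => ?_,
    eq_rowLine_of_forall_mem hι one_ne_zero hc fun w => ?_,
    eq_colLine_of_forall_mem hι (by simp) he fun u => ?_,
    eq_colLine_of_forall_mem hι (by simp) hf fun u => ?_⟩ <;>
    simp only [linearCombination_vecMulVec, Fin.sum_univ_two]
  · simpa using add_mem (a.smul_mem (w 0) hPa) (a.smul_mem (w 1) hQa)
  · simpa using add_mem (b.smul_mem (w 0) hP'b) (b.smul_mem (w 1) hQ'b)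
  · convert add_mem (c.smul_mem (w 0) hPc) (c.smul_mem (w 1) hQc) using 1
    simp only [Pi.one_apply, one_smul, of_apply, cons_val', cons_val_zero, cons_val_one,
      empty_val', cons_val_fin_one]
    module
  · simpa using mem_span_pair.2 ⟨u 0, u 1, rfl⟩
  · simpa using mem_span_pair.2 ⟨u 0, u 1, rfl⟩

end Segre

end Gallucci

/-- Gallucci's theorem in `ℙ³(K)` over a (commutative) field `K`: if the three pairwise skew
lines `e`, `f`, `g` each meet the three pairwise skew lines `a`, `b`, `c`, then every
transversal `h` of `a`, `b`, `c` meets every transversal `d` of `e`, `f`, `g`. -/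
theorem gallucci {K : Type*} [Field K]
    (a b c e f g h d : Submodule K (Fin 4 → K))
    (ha : Module.finrank K a = 2) (hb : Module.finrank K b = 2)
    (hc : Module.finrank K c = 2) (he : Module.finrank K e = 2)
    (hf : Module.finrank K f = 2) (hg : Module.finrank K g = 2)
    (hh : Module.finrank K h = 2) (hd : Module.finrank K d = 2)
    (hab : a ⊓ b = ⊥) (hac : a ⊓ c = ⊥) (hbc : b ⊓ c = ⊥)
    (hef : e ⊓ f = ⊥) (heg : e ⊓ g = ⊥) (hfg : f ⊓ g = ⊥)
    (hea : e ⊓ a ≠ ⊥) (heb : e ⊓ b ≠ ⊥) (hec : e ⊓ c ≠ ⊥)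
    (hfa : f ⊓ a ≠ ⊥) (hfb : f ⊓ b ≠ ⊥) (hfc : f ⊓ c ≠ ⊥)
    (hga : g ⊓ a ≠ ⊥) (hgb : g ⊓ b ≠ ⊥) (hgc : g ⊓ c ≠ ⊥)
    (hha : h ⊓ a ≠ ⊥) (hhb : h ⊓ b ≠ ⊥) (hhc : h ⊓ c ≠ ⊥)
    (hde : d ⊓ e ≠ ⊥) (hdf : d ⊓ f ≠ ⊥) (hdg : d ⊓ g ≠ ⊥) :
    h ⊓ d ≠ ⊥ := by
  obtain ⟨ι, hι, rfl, rfl, rfl, rfl, rfl⟩ := Segre.exists_injective_rowLine_colLine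
    ha hb hc he hf hab hac hbc hef hea heb hec hfa hfb hfc
  obtain ⟨w, hw, rfl⟩ := Segre.exists_eq_colLine_of_inf_ne_bot hι hab hac hbc hh hha hhb hhc
  obtain ⟨_, -, rfl⟩ := Segre.exists_eq_colLine_of_inf_ne_bot hι hab hac hbc hg hga hgb hgc
  simp only [← Segre.rowLine_transpose] at hef heg hfg hde hdf hdg
  obtain ⟨u, hu, rfl⟩ := Segre.exists_eq_colLine_of_inf_ne_bot
    (Segre.injective_comp_transpose hι) hef heg hfg hd hde hdf hdg
  rw [Segre.colLine_transpose, inf_comm]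
  exact Segre.rowLine_inf_colLine_ne_bot hι hu hw
end

section
/- (Pappus–Brianchon theorem, dual form of Pappus.) Let K be a field. Let S and S' be distinct points of ℙ²(K), let a, b, c be three distinct lines through S and a', b', c' three distinct lines through S', none of the six lines equal to the line SS'. Let c'' be the line joining the points a ∩ b' and a' ∩ b, b'' the line joining a ∩ c' and a' ∩ c, and a'' the line joining b ∩ c' and b' ∩ c. Then the three lines a'', b'', c'' are concurrent. -/
open Module Submodule

namespace PappusAux

variable {K : Type*} [Field K]

lemma exists_span (S : Submodule K (Fin 3 → K)) (hS : Module.finrank K S = 1) :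
    ∃ v : Fin 3 → K, v ≠ 0 ∧ S = span K {v} := by
  have hbot : S ≠ ⊥ := by
    intro h
    rw [h, finrank_bot] at hS
    exact one_ne_zero hS.symm
  obtain ⟨v, hv, hv0⟩ := (Submodule.ne_bot_iff S).1 hbot
  refine ⟨v, hv0, ?_⟩
  refine (Submodule.eq_of_le_of_finrank_eq ((span_singleton_le_iff_mem _ _).2 hv) ?_).symm
  rw [finrank_span_singleton hv0, hS]

lemma exists_param {ℓ : Submodule K (Fin 3 → K)} (hl2 : Module.finrank K ℓ = 2)
    {u : Fin 3 → K} (hu : u ∉ ℓ) (t : Fin 3 → K) : ∃ x : K, x • u + t ∈ ℓ := by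
  have hu0 : u ≠ 0 := fun h => hu (h ▸ zero_mem ℓ)
  have hinf : ℓ ⊓ span K {u} = ⊥ := by
    rw [eq_bot_iff]
    intro v hv
    obtain ⟨hv1, hv2⟩ := Submodule.mem_inf.1 hv
    obtain ⟨c, rfl⟩ := mem_span_singleton.1 hv2
    rcases eq_or_ne c 0 with rfl | hc
    · simp
    · exact absurd (show u ∈ ℓ by
        simpa [smul_smul, inv_mul_cancel₀ hc] using ℓ.smul_mem c⁻¹ hv1) hu
  have hsup : Module.finrank K ↥(ℓ ⊔ span K {u}) = 3 := by
    have h := Submodule.finrank_sup_add_finrank_inf_eq ℓ (span K {u})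
    rw [hinf, finrank_span_singleton hu0, hl2, finrank_bot] at h
    omega
  have htop : ℓ ⊔ span K {u} = ⊤ :=
    Submodule.eq_top_of_finrank_eq (by rw [hsup, Module.finrank_fin_fun])
  obtain ⟨w, hw, z, hz, hwz⟩ := Submodule.mem_sup.1 (htop ▸ Submodule.mem_top (x := t))
  obtain ⟨c, rfl⟩ := mem_span_singleton.1 hz
  refine ⟨-c, ?_⟩
  have h : (-c) • u + t = w := by rw [← hwz]; module
  rw [h]; exact hw

lemma not_mem_of_ne {S S' ℓ : Submodule K (Fin 3 → K)}
    (hSS2 : Module.finrank K ↥(S ⊔ S') = 2)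
    (hl2 : Module.finrank K ℓ = 2) (hSl : S ≤ ℓ) {v : Fin 3 → K} (hv : S' = span K {v})
    (hne : ℓ ≠ S ⊔ S') : v ∉ ℓ := fun h =>
  hne (Submodule.eq_of_le_of_finrank_eq
    (sup_le hSl (by rw [hv]; exact (span_singleton_le_iff_mem _ _).2 h))
    (by rw [hSS2, hl2])).symm

lemma span_pair_range {v w : Fin 3 → K} :
    ({v, w} : Set (Fin 3 → K)) = Set.range ![v, w] := by
  ext u
  simp [Matrix.range_cons, Matrix.range_empty, or_comm]

lemma finrank_span_pair' {v w : Fin 3 → K} (h : LinearIndependent K ![v, w]) :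
    Module.finrank K ↥(span K {v, w}) = 2 := by
  rw [span_pair_range, finrank_span_eq_card h]
  simp

lemma finrank_ker_combo {f : (Fin 3 → K) →ₗ[K] K} {v : Fin 3 → K} (hv : f v ≠ 0) :
    Module.finrank K ↥(LinearMap.ker f) = 2 := by
  have hr : LinearMap.range f = ⊤ := by
    rw [LinearMap.range_eq_top]
    intro y
    refine ⟨(y * (f v)⁻¹) • v, ?_⟩
    rw [map_smul, smul_eq_mul]
    field_simp
  have h := LinearMap.finrank_range_add_finrank_ker f
  rw [hr, finrank_top, Module.finrank_self, Module.finrank_fin_fun] at h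
  omega

variable (s s' t : Fin 3 → K) (B : Basis (Fin 3) K (Fin 3 → K))

lemma coords_eq_zero (hB : ⇑B = ![t, s, s']) {x y z : K}
    (h : x • s + y • s' + z • t = 0) : x = 0 ∧ y = 0 ∧ z = 0 := by
  have hs : s = B 1 := by rw [hB]; rfl
  have hs' : s' = B 2 := by rw [hB]; rfl
  have ht : t = B 0 := by rw [hB]; rfl
  rw [hs, hs', ht] at h
  refine ⟨?_, ?_, ?_⟩
  · have h1 := congrArg (B.coord 1) h
    simpa [Basis.coord_apply, Basis.repr_self_apply] using h1
  · have h1 := congrArg (B.coord 2) h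
    simpa [Basis.coord_apply, Basis.repr_self_apply] using h1
  · have h1 := congrArg (B.coord 0) h
    simpa [Basis.coord_apply, Basis.repr_self_apply] using h1

/-- The linear functional with coefficients `p, q, r` on the coordinates along `s, s', t`. -/
noncomputable def combo (p q r : K) : (Fin 3 → K) →ₗ[K] K :=
  p • B.coord 1 + q • B.coord 2 + r • B.coord 0

lemma eval_combo (hB : ⇑B = ![t, s, s']) (p q r x y z : K) :
    combo B p q r (x • s + y • s' + z • t) = p * x + q * y + r * z := by
  have hs : s = B 1 := by rw [hB]; rfl
  have hs' : s' = B 2 := by rw [hB]; rfl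
  have ht : t = B 0 := by rw [hB]; rfl
  rw [hs, hs', ht]
  unfold combo
  simp [Basis.coord_apply, Basis.repr_self_apply]

lemma combo_apply (hB : ⇑B = ![t, s, s']) (p q r x y : K) :
    combo B p q r (x • s + y • s' + t) = p * x + q * y + r := by
  have h := eval_combo s s' t B hB p q r x y 1
  rw [one_smul] at h
  rw [h]; ring

lemma combo_s (hB : ⇑B = ![t, s, s']) (p q r : K) :
    combo B p q r s = p := by
  have hrw : s = (1 : K) • s + (0 : K) • s' + (0 : K) • t := by module
  rw [hrw, eval_combo s s' t B hB]
  ring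

lemma combo_add (p q r p' q' r' : K) :
    combo B p q r + combo B p' q' r' = combo B (p + p') (q + q') (r + r') := by
  unfold combo
  module

lemma line_eq_span (hB : ⇑B = ![t, s, s']) {ℓ : Submodule K (Fin 3 → K)}
    (hl2 : Module.finrank K ℓ = 2) (hs : s ∈ ℓ) {x : K} (hx : x • s' + t ∈ ℓ) :
    ℓ = span K {s, x • s' + t} := by
  have hli : LinearIndependent K ![s, x • s' + t] := by
    rw [LinearIndependent.pair_iff]
    intro c d hcd
    have h : c • s + (d * x) • s' + d • t = 0 := by
      rw [← hcd]; module
    obtain ⟨h1, _, h3⟩ := coords_eq_zero s s' t B hB h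
    exact ⟨h1, h3⟩
  refine (Submodule.eq_of_le_of_finrank_eq ?_ ?_).symm
  · rw [span_le]
    rintro v (rfl | rfl)
    · exact hs
    · exact hx
  · rw [finrank_span_pair' hli, hl2]

lemma inter_eq (hB : ⇑B = ![t, s, s']) {ℓ ℓ' : Submodule K (Fin 3 → K)}
    (hl2 : Module.finrank K ℓ = 2) (hl'2 : Module.finrank K ℓ' = 2) {x y : K}
    (hs : s ∈ ℓ) (hx : x • s' + t ∈ ℓ) (hs' : s' ∈ ℓ') (hy : y • s + t ∈ ℓ') :
    ℓ ⊓ ℓ' = span K {y • s + x • s' + t} := by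
  have hvl : y • s + x • s' + t ∈ ℓ := by
    have h : y • s + x • s' + t = y • s + (x • s' + t) := by module
    rw [h]; exact add_mem (ℓ.smul_mem _ hs) hx
  have hvl' : y • s + x • s' + t ∈ ℓ' := by
    have h : y • s + x • s' + t = x • s' + (y • s + t) := by module
    rw [h]; exact add_mem (ℓ'.smul_mem _ hs') hy
  have hv0 : y • s + x • s' + t ≠ 0 := by
    intro h0
    have h : y • s + x • s' + (1 : K) • t = 0 := by rw [one_smul]; exact h0
    exact one_ne_zero (coords_eq_zero s s' t B hB h).2.2
  have htop : (⊤ : Submodule K (Fin 3 → K)) ≤ ℓ ⊔ ℓ' := by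
    rw [← B.span_eq, span_le, hB]
    rintro v ⟨i, rfl⟩
    fin_cases i
    · show t ∈ ℓ ⊔ ℓ'
      have h : t = (x • s' + t) - x • s' := by module
      rw [h]
      exact sub_mem (Submodule.mem_sup_left hx) (Submodule.mem_sup_right (ℓ'.smul_mem _ hs'))
    · exact Submodule.mem_sup_left hs
    · exact Submodule.mem_sup_right hs'
  have hsup : ℓ ⊔ ℓ' = ⊤ := top_unique htop
  have h3 : Module.finrank K ↥(ℓ ⊔ ℓ') = 3 := by
    rw [hsup, finrank_top, Module.finrank_fin_fun]
  have h4 := Submodule.finrank_sup_add_finrank_inf_eq ℓ ℓ'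
  rw [h3, hl2, hl'2] at h4
  refine (Submodule.eq_of_le_of_finrank_eq
    ((span_singleton_le_iff_mem _ _).2 (Submodule.mem_inf.2 ⟨hvl, hvl'⟩)) ?_).symm
  rw [finrank_span_singleton hv0]
  omega

end PappusAux

open PappusAux

/-- The Pappus–Brianchon theorem (dual form of Pappus) in the projective plane `ℙ²(K)` over a
field `K`: with `a, b, c` distinct lines through `S` and `a', b', c'` distinct lines through
`S'` (none equal to the line `SS'`), the lines
`a'' = (b ⊓ c') ⊔ (b' ⊓ c)`, `b'' = (a ⊓ c') ⊔ (a' ⊓ c)`, `c'' = (a ⊓ b') ⊔ (a' ⊓ b)`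
are concurrent. -/
theorem pappus_brianchon {K : Type*} [Field K]
    (S S' : Submodule K (Fin 3 → K))
    (hS : Module.finrank K S = 1) (hS' : Module.finrank K S' = 1) (hSS' : S ≠ S')
    (a b c a' b' c' : Submodule K (Fin 3 → K))
    (ha : Module.finrank K a = 2) (hb : Module.finrank K b = 2)
    (hc : Module.finrank K c = 2) (ha' : Module.finrank K a' = 2)
    (hb' : Module.finrank K b' = 2) (hc' : Module.finrank K c' = 2)
    (hSa : S ≤ a) (hSb : S ≤ b) (hSc : S ≤ c)
    (hab : a ≠ b) (hac : a ≠ c) (hbc : b ≠ c)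
    (hS'a' : S' ≤ a') (hS'b' : S' ≤ b') (hS'c' : S' ≤ c')
    (ha'b' : a' ≠ b') (ha'c' : a' ≠ c') (hb'c' : b' ≠ c')
    (haSS' : a ≠ S ⊔ S') (hbSS' : b ≠ S ⊔ S') (hcSS' : c ≠ S ⊔ S')
    (ha'SS' : a' ≠ S ⊔ S') (hb'SS' : b' ≠ S ⊔ S') (hc'SS' : c' ≠ S ⊔ S') :
    ∃ P : Submodule K (Fin 3 → K), Module.finrank K P = 1 ∧
      P ≤ (b ⊓ c') ⊔ (b' ⊓ c) ∧ P ≤ (a ⊓ c') ⊔ (a' ⊓ c) ∧ P ≤ (a ⊓ b') ⊔ (a' ⊓ b) := by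
  classical
  obtain ⟨s, hs0, hSs⟩ := exists_span S hS
  obtain ⟨s', hs'0, hS's'⟩ := exists_span S' hS'
  have hsS : s ∈ S := by rw [hSs]; exact Submodule.mem_span_singleton_self s
  have hs'S' : s' ∈ S' := by rw [hS's']; exact Submodule.mem_span_singleton_self s'
  have hdisj : S ⊓ S' = ⊥ := by
    by_contra h
    obtain ⟨v, hv, hv0⟩ := (Submodule.ne_bot_iff _).1 h
    obtain ⟨hv1, hv2⟩ := Submodule.mem_inf.1 hv
    have h1 : span K {v} = S := Submodule.eq_of_le_of_finrank_eq
      ((span_singleton_le_iff_mem _ _).2 hv1) (by rw [finrank_span_singleton hv0, hS])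
    have h2 : span K {v} = S' := Submodule.eq_of_le_of_finrank_eq
      ((span_singleton_le_iff_mem _ _).2 hv2) (by rw [finrank_span_singleton hv0, hS'])
    exact hSS' (h1.symm.trans h2)
  have hSS2 : Module.finrank K ↥(S ⊔ S') = 2 := by
    have h := Submodule.finrank_sup_add_finrank_inf_eq S S'
    rw [hdisj, finrank_bot, hS, hS'] at h
    omega
  have hSsup : S ⊔ S' = span K {s, s'} := by
    rw [hSs, hS's', ← Submodule.span_union, Set.singleton_union]
  obtain ⟨t, ht⟩ : ∃ t, t ∉ S ⊔ S' := by
    by_contra h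
    push_neg at h
    have htop : (S ⊔ S') = ⊤ := eq_top_iff.2 fun v _ => h v
    rw [htop, finrank_top, Module.finrank_fin_fun] at hSS2
    omega
  have hs'S : s' ∉ S := by
    intro h
    exact hSS' (Submodule.eq_of_le_of_finrank_eq
      (show S' ≤ S by rw [hS's']; exact (span_singleton_le_iff_mem _ _).2 h)
      (by rw [hS', hS])).symm
  have hli2 : LinearIndependent K ![s, s'] := (LinearIndependent.pair_iff' hs0).2
    (fun x hx => hs'S (hx ▸ S.smul_mem x hsS))
  have hli3 : LinearIndependent K ![t, s, s'] := by
    rw [show (![t, s, s'] : Fin 3 → Fin 3 → K) = Fin.cons t ![s, s'] from rfl,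
      linearIndependent_fin_cons]
    refine ⟨hli2, ?_⟩
    rw [← span_pair_range, ← hSsup]
    exact ht
  have hcard : Fintype.card (Fin 3) = Module.finrank K (Fin 3 → K) := by
    rw [Module.finrank_fin_fun, Fintype.card_fin]
  let B := basisOfLinearIndependentOfCardEqFinrank hli3 hcard
  have hB : ⇑B = ![t, s, s'] := coe_basisOfLinearIndependentOfCardEqFinrank hli3 hcard
  -- memberships
  have hsa : s ∈ a := hSa hsS
  have hsb : s ∈ b := hSb hsS
  have hsc : s ∈ c := hSc hsS
  have hs'a' : s' ∈ a' := hS'a' hs'S'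
  have hs'b' : s' ∈ b' := hS'b' hs'S'
  have hs'c' : s' ∈ c' := hS'c' hs'S'
  -- non-memberships
  have hs'a : s' ∉ a := not_mem_of_ne hSS2 ha hSa hS's' haSS'
  have hs'b : s' ∉ b := not_mem_of_ne hSS2 hb hSb hS's' hbSS'
  have hs'c : s' ∉ c := not_mem_of_ne hSS2 hc hSc hS's' hcSS'
  have hSS2' : Module.finrank K ↥(S' ⊔ S) = 2 := by rw [sup_comm]; exact hSS2
  have ha'ne : a' ≠ S' ⊔ S := by rw [sup_comm]; exact ha'SS'
  have hb'ne : b' ≠ S' ⊔ S := by rw [sup_comm]; exact hb'SS'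
  have hc'ne : c' ≠ S' ⊔ S := by rw [sup_comm]; exact hc'SS'
  have hsa' : s ∉ a' := not_mem_of_ne hSS2' ha' hS'a' hSs ha'ne
  have hsb' : s ∉ b' := not_mem_of_ne hSS2' hb' hS'b' hSs hb'ne
  have hsc' : s ∉ c' := not_mem_of_ne hSS2' hc' hS'c' hSs hc'ne
  -- parameters
  obtain ⟨α, hα⟩ := exists_param ha hs'a t
  obtain ⟨β, hβ⟩ := exists_param hb hs'b t
  obtain ⟨γ, hγ⟩ := exists_param hc hs'c t
  obtain ⟨α', hα'⟩ := exists_param ha' hsa' t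
  obtain ⟨β', hβ'⟩ := exists_param hb' hsb' t
  obtain ⟨γ', hγ'⟩ := exists_param hc' hsc' t
  -- distinctness of parameters
  have hαβ : α ≠ β := by
    intro e
    apply hab
    rw [line_eq_span s s' t B hB ha hsa hα, line_eq_span s s' t B hB hb hsb hβ, e]
  have hαγ : α ≠ γ := by
    intro e
    apply hac
    rw [line_eq_span s s' t B hB ha hsa hα, line_eq_span s s' t B hB hc hsc hγ, e]
  have hβγ : β ≠ γ := by
    intro e
    apply hbc
    rw [line_eq_span s s' t B hB hb hsb hβ, line_eq_span s s' t B hB hc hsc hγ, e]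
  -- the six intersection points
  have hbc' : b ⊓ c' = span K {γ' • s + β • s' + t} :=
    inter_eq s s' t B hB hb hc' hsb hβ hs'c' hγ'
  have hb'c : b' ⊓ c = span K {β' • s + γ • s' + t} := by
    rw [inf_comm]; exact inter_eq s s' t B hB hc hb' hsc hγ hs'b' hβ'
  have hac' : a ⊓ c' = span K {γ' • s + α • s' + t} :=
    inter_eq s s' t B hB ha hc' hsa hα hs'c' hγ'
  have ha'c : a' ⊓ c = span K {α' • s + γ • s' + t} := by
    rw [inf_comm]; exact inter_eq s s' t B hB hc ha' hsc hγ hs'a' hα'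
  have hab' : a ⊓ b' = span K {β' • s + α • s' + t} :=
    inter_eq s s' t B hB ha hb' hsa hα hs'b' hβ'
  have ha'b : a' ⊓ b = span K {α' • s + β • s' + t} := by
    rw [inf_comm]; exact inter_eq s s' t B hB hb ha' hsb hβ hs'a' hα'
  -- the three new lines as spans of pairs
  have hA : (b ⊓ c') ⊔ (b' ⊓ c)
      = span K {γ' • s + β • s' + t, β' • s + γ • s' + t} := by
    rw [hbc', hb'c, ← Submodule.span_union, Set.singleton_union]
  have hBB : (a ⊓ c') ⊔ (a' ⊓ c)
      = span K {γ' • s + α • s' + t, α' • s + γ • s' + t} := by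
    rw [hac', ha'c, ← Submodule.span_union, Set.singleton_union]
  have hCC : (a ⊓ b') ⊔ (a' ⊓ b)
      = span K {β' • s + α • s' + t, α' • s + β • s' + t} := by
    rw [hab', ha'b, ← Submodule.span_union, Set.singleton_union]
  -- linear independence of the pairs
  have pair_li : ∀ x y x' y' : K, y ≠ y' →
      LinearIndependent K ![x • s + y • s' + t, x' • s + y' • s' + t] := by
    intro x y x' y' hne
    rw [LinearIndependent.pair_iff]
    intro c1 c2 h
    have h' : (c1 * x + c2 * x') • s + (c1 * y + c2 * y') • s' + (c1 + c2) • t = 0 := by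
      rw [← h]; module
    obtain ⟨h1, h2, h3⟩ := coords_eq_zero s s' t B hB h'
    have e1 : c2 = -c1 := by linear_combination h3
    have e2 : c1 * (y - y') = 0 := by rw [e1] at h2; linear_combination h2
    have hc1 : c1 = 0 := by
      rcases mul_eq_zero.1 e2 with h | h
      · exact h
      · exact absurd (sub_eq_zero.1 h) hne
    refine ⟨hc1, ?_⟩
    rw [hc1] at e1
    rw [e1]; ring
  have hliA := pair_li γ' β β' γ hβγ
  have hliB := pair_li γ' α α' γ hαγ
  have hliC := pair_li β' α α' β hαβ
  have hfA : Module.finrank K ↥((b ⊓ c') ⊔ (b' ⊓ c)) = 2 := by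
    rw [hA]; exact finrank_span_pair' hliA
  have hfB : Module.finrank K ↥((a ⊓ c') ⊔ (a' ⊓ c)) = 2 := by
    rw [hBB]; exact finrank_span_pair' hliB
  have hfC : Module.finrank K ↥((a ⊓ b') ⊔ (a' ⊓ b)) = 2 := by
    rw [hCC]; exact finrank_span_pair' hliC
  -- a'' ⊓ c'' is nontrivial
  have h5 := Submodule.finrank_sup_add_finrank_inf_eq
    ((b ⊓ c') ⊔ (b' ⊓ c)) ((a ⊓ b') ⊔ (a' ⊓ b))
  have h6 : Module.finrank K ↥(((b ⊓ c') ⊔ (b' ⊓ c)) ⊔ ((a ⊓ b') ⊔ (a' ⊓ b))) ≤ 3 := by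
    have := Submodule.finrank_le (((b ⊓ c') ⊔ (b' ⊓ c)) ⊔ ((a ⊓ b') ⊔ (a' ⊓ b)))
    rwa [Module.finrank_fin_fun] at this
  rw [hfA, hfC] at h5
  have hnebot : ((b ⊓ c') ⊔ (b' ⊓ c)) ⊓ ((a ⊓ b') ⊔ (a' ⊓ b)) ≠ ⊥ := by
    intro h
    rw [h, finrank_bot] at h5
    omega
  obtain ⟨v, hv, hv0⟩ := (Submodule.ne_bot_iff _).1 hnebot
  obtain ⟨hvA, hvC⟩ := Submodule.mem_inf.1 hv
  -- the functionals
  have hfaA : (b ⊓ c') ⊔ (b' ⊓ c)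
      ≤ LinearMap.ker (combo B (β - γ) (β' - γ') (γ * γ' - β * β')) := by
    rw [hA, span_le]
    rintro w (rfl | rfl) <;>
      (rw [SetLike.mem_coe, LinearMap.mem_ker, combo_apply s s' t B hB]; ring)
  have hfcC : (a ⊓ b') ⊔ (a' ⊓ b)
      ≤ LinearMap.ker (combo B (α - β) (α' - β') (β * β' - α * α')) := by
    rw [hCC, span_le]
    rintro w (rfl | rfl) <;>
      (rw [SetLike.mem_coe, LinearMap.mem_ker, combo_apply s s' t B hB]; ring)
  have hva : combo B (β - γ) (β' - γ') (γ * γ' - β * β') v = 0 := hfaA hvA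
  have hvc : combo B (α - β) (α' - β') (β * β' - α * α') v = 0 := hfcC hvC
  have hvb : combo B (α - γ) (α' - γ') (γ * γ' - α * α') v = 0 := by
    have hsum := combo_add B (β - γ) (β' - γ') (γ * γ' - β * β')
      (α - β) (α' - β') (β * β' - α * α')
    have he : combo B (α - γ) (α' - γ') (γ * γ' - α * α')
        = combo B (β - γ) (β' - γ') (γ * γ' - β * β')
          + combo B (α - β) (α' - β') (β * β' - α * α') := by
      rw [hsum]; ring_nf
    rw [he, LinearMap.add_apply, hva, hvc, add_zero]
  -- b'' equals the kernel of the middle functional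
  have hfbB : (a ⊓ c') ⊔ (a' ⊓ c)
      ≤ LinearMap.ker (combo B (α - γ) (α' - γ') (γ * γ' - α * α')) := by
    rw [hBB, span_le]
    rintro w (rfl | rfl) <;>
      (rw [SetLike.mem_coe, LinearMap.mem_ker, combo_apply s s' t B hB]; ring)
  have hfbs : combo B (α - γ) (α' - γ') (γ * γ' - α * α') s ≠ 0 := by
    rw [combo_s s s' t B hB]
    exact sub_ne_zero.2 hαγ
  have hkerB : Module.finrank K
      ↥(LinearMap.ker (combo B (α - γ) (α' - γ') (γ * γ' - α * α'))) = 2 :=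
    finrank_ker_combo hfbs
  have hBeq : (a ⊓ c') ⊔ (a' ⊓ c)
      = LinearMap.ker (combo B (α - γ) (α' - γ') (γ * γ' - α * α')) :=
    Submodule.eq_of_le_of_finrank_eq hfbB (by rw [hfB, hkerB])
  have hvB : v ∈ (a ⊓ c') ⊔ (a' ⊓ c) := by
    rw [hBeq, LinearMap.mem_ker]
    exact hvb
  exact ⟨span K {v}, finrank_span_singleton hv0,
    (span_singleton_le_iff_mem _ _).2 hvA,
    (span_singleton_le_iff_mem _ _).2 hvB,
    (span_singleton_le_iff_mem _ _).2 hvC⟩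
end

section
/- (Composition of central perspectivities along concurrent lines.) Let K be a field. Let a, a', a'' be lines of ℙ²(K) containing a common point S, with a ≠ a''. Let O be a point on neither a nor a', and O' a point on neither a' nor a''. For a point X on a, let f(X) be the unique point on both line OX and a' (with f(S) = S), and for a point X' on a', let g(X') be the unique point on both line O'X' and a'' (with g(S) = S). Then there exists a point O*, lying on neither a nor a'' and lying on the line OO' if O ≠ O' (and equal to O if O = O'), such that for every point X on a, g(f(X)) is the unique point on both line O*X and a''; that is, the composite g∘f is the central perspectivity from a to a'' with center O*. -/
open Submodule Module

section Aux

variable {K : Type*} [Field K]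

/-- A 1-dimensional submodule not contained in `Q` meets `Q` trivially. -/
private lemma aux_disj (P Q : Submodule K (Fin 3 → K))
    (hP : Module.finrank K P = 1) (h : ¬ P ≤ Q) : P ⊓ Q = ⊥ := by
  by_contra hne
  have h0 : Module.finrank K ↥(P ⊓ Q) ≠ 0 := by
    simpa [Submodule.finrank_eq_zero] using hne
  have h1 : Module.finrank K P ≤ Module.finrank K ↥(P ⊓ Q) := by omega
  have := Submodule.eq_of_le_of_finrank_le (inf_le_left : P ⊓ Q ≤ P) h1
  exact h (this ▸ (inf_le_right : P ⊓ Q ≤ Q))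

/-- A point plus a line not containing it span everything. -/
private lemma aux_top (P L : Submodule K (Fin 3 → K))
    (hP : Module.finrank K P = 1) (hL : Module.finrank K L = 2)
    (h : ¬ P ≤ L) : P ⊔ L = ⊤ := by
  have hinf : P ⊓ L = ⊥ := aux_disj P L hP h
  have := Submodule.finrank_sup_add_finrank_inf_eq P L
  rw [hinf] at this
  apply Submodule.eq_top_of_finrank_eq
  have h3 : finrank K (Fin 3 → K) = 3 := by simp
  simp [finrank_bot] at this
  omega

/-- Two-dimensional `L` meets the line `P ⊔ T` (with `P, T` distinct points,
`P` not on `L`) in a single point. -/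
private lemma aux_meet_rank (L P T : Submodule K (Fin 3 → K))
    (hL : Module.finrank K L = 2) (hP : Module.finrank K P = 1)
    (hT : Module.finrank K T = 1) (hPL : ¬ P ≤ L) (hPT : ¬ P ≤ T) :
    Module.finrank K ↥(L ⊓ (P ⊔ T)) = 1 := by
  have hPTd : P ⊓ T = ⊥ := aux_disj P T hP hPT
  have h2 : Module.finrank K ↥(P ⊔ T) = 2 := by
    have := Submodule.finrank_sup_add_finrank_inf_eq P T
    rw [hPTd] at this
    simp [finrank_bot] at this
    omega
  have htop : L ⊔ (P ⊔ T) = ⊤ := by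
    have h1 : P ⊔ L = ⊤ := aux_top P L hP hL hPL
    have : P ⊔ L ≤ L ⊔ (P ⊔ T) := by
      rw [sup_comm P L]
      exact sup_le_sup_left le_sup_left L
    exact top_le_iff.mp (h1 ▸ this)
  have := Submodule.finrank_sup_add_finrank_inf_eq L (P ⊔ T)
  rw [htop] at this
  have h3 : finrank K (⊤ : Submodule K (Fin 3 → K)) = 3 := by
    rw [finrank_top]; simp
  omega

/-- If moreover the point `T` is on `L`, then `L ⊓ (P ⊔ T) = T`. -/
private lemma aux_meet (L P T : Submodule K (Fin 3 → K))
    (hL : Module.finrank K L = 2) (hP : Module.finrank K P = 1)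
    (hT : Module.finrank K T = 1) (hPL : ¬ P ≤ L) (hTL : T ≤ L) :
    L ⊓ (P ⊔ T) = T := by
  have hPT : ¬ P ≤ T := fun h => hPL (h.trans hTL)
  have hr := aux_meet_rank L P T hL hP hT hPL hPT
  have hle : T ≤ L ⊓ (P ⊔ T) := le_inf hTL le_sup_right
  exact (Submodule.eq_of_le_of_finrank_le hle (by omega)).symm

/-- Two distinct lines through the point `S` meet exactly in `S`. -/
private lemma aux_lines_meet (L M S : Submodule K (Fin 3 → K))
    (hL : Module.finrank K L = 2) (hM : Module.finrank K M = 2)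
    (hS : Module.finrank K S = 1) (hSL : S ≤ L) (hSM : S ≤ M)
    (hne : L ≠ M) : L ⊓ M = S := by
  have hnle : ¬ M ≤ L := fun h =>
    hne (Submodule.eq_of_le_of_finrank_le h (by omega)).symm
  have hlt : L < L ⊔ M := lt_of_le_of_ne le_sup_left (fun h => hnle (h ▸ le_sup_right))
  have h3' : Module.finrank K ↥(L ⊔ M) ≤ 3 := by
    have := Submodule.finrank_le (L ⊔ M : Submodule K (Fin 3 → K))
    simpa using this
  have hgt : Module.finrank K L < Module.finrank K ↥(L ⊔ M) :=
    Submodule.finrank_lt_finrank_of_lt hlt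
  have := Submodule.finrank_sup_add_finrank_inf_eq L M
  have hinf : Module.finrank K ↥(L ⊓ M) = 1 := by omega
  have hle : S ≤ L ⊓ M := le_inf hSL hSM
  exact (Submodule.eq_of_le_of_finrank_le hle (by omega)).symm

/-- A generator of a 1-dimensional submodule. -/
private lemma aux_gen (P : Submodule K (Fin 3 → K)) (hP : Module.finrank K P = 1) :
    ∃ v, v ≠ 0 ∧ v ∈ P ∧ P = span K {v} := by
  have hne : P ≠ ⊥ := by
    intro h; rw [h] at hP; simp [finrank_bot] at hP
  obtain ⟨v, hvP, hv0⟩ := Submodule.exists_mem_ne_zero_of_ne_bot hne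
  refine ⟨v, hv0, hvP, ?_⟩
  have hle : span K {v} ≤ P := by
    rw [span_le, Set.singleton_subset_iff]; exact hvP
  exact (Submodule.eq_of_le_of_finrank_le hle
    (by rw [finrank_span_singleton hv0, hP])).symm

/-- A nonzero element of a 1-dimensional submodule spans it. -/
private lemma aux_eq_span (P : Submodule K (Fin 3 → K)) (hP : Module.finrank K P = 1)
    (v : Fin 3 → K) (hv0 : v ≠ 0) (hvP : v ∈ P) : P = span K {v} := by
  have hle : span K {v} ≤ P := by
    rw [span_le, Set.singleton_subset_iff]; exact hvP
  exact (Submodule.eq_of_le_of_finrank_le hle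
    (by rw [finrank_span_singleton hv0, hP])).symm

end Aux

/-- Composition of central perspectivities along concurrent lines of `ℙ²(K)`: if `a, a', a''`
are lines through a common point `S` with `a ≠ a''`, `O` is a center of perspectivity from
`a` to `a'` and `O'` a center of perspectivity from `a'` to `a''`, then the composite is a
central perspectivity from `a` to `a''` whose center `O*` lies on the line `OO'` (and equals
`O` when `O = O'`). For a point `X` on `a`, its image under the perspectivity with center `O`
is the unique point lying on both the line `OX` (i.e. `O ⊔ X`) and `a'`. -/
theorem comp_of_perspectivities_concurrent {K : Type*} [Field K]
    (a a' a'' S O O' : Submodule K (Fin 3 → K))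
    (ha : Module.finrank K a = 2) (ha' : Module.finrank K a' = 2)
    (ha'' : Module.finrank K a'' = 2)
    (hS : Module.finrank K S = 1) (hSa : S ≤ a) (hSa' : S ≤ a') (hSa'' : S ≤ a'')
    (haa'' : a ≠ a'')
    (hO : Module.finrank K O = 1) (hOa : ¬ O ≤ a) (hOa' : ¬ O ≤ a')
    (hO' : Module.finrank K O' = 1) (hO'a' : ¬ O' ≤ a') (hO'a'' : ¬ O' ≤ a'') :
    ∃ Ostar : Submodule K (Fin 3 → K), Module.finrank K Ostar = 1 ∧
      ¬ Ostar ≤ a ∧ ¬ Ostar ≤ a'' ∧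
      (O ≠ O' → Ostar ≤ O ⊔ O') ∧ (O = O' → Ostar = O) ∧
      ∀ X X' X'' : Submodule K (Fin 3 → K),
        Module.finrank K X = 1 → Module.finrank K X' = 1 → Module.finrank K X'' = 1 →
        X ≤ a →
        X' ≤ a' → X' ≤ O ⊔ X →
        X'' ≤ a'' → X'' ≤ O' ⊔ X' →
        X'' ≤ Ostar ⊔ X := by
  -- a generator of S
  obtain ⟨s, hs0, hsS, hSspan⟩ := aux_gen S hS
  -- a point u of a not in S
  have hSlt : S < a := lt_of_le_of_ne hSa (fun h => by rw [h] at hS; omega)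
  obtain ⟨u, hua, huS⟩ := SetLike.exists_of_lt hSlt
  have hu0 : u ≠ 0 := fun h => huS (h ▸ S.zero_mem)
  -- a = S ⊔ span u
  have haSu : a = S ⊔ span K {u} := by
    have hle : S ⊔ span K {u} ≤ a := sup_le hSa (by
      rw [span_le, Set.singleton_subset_iff]; exact hua)
    have hd : S ⊓ span K {u} = ⊥ := by
      rw [inf_comm]
      exact aux_disj _ _ (finrank_span_singleton hu0) (by
        intro h; exact huS (h (mem_span_singleton_self u)))
    have := Submodule.finrank_sup_add_finrank_inf_eq S (span K {u})
    rw [hd] at this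
    simp [finrank_bot, finrank_span_singleton hu0] at this
    exact (Submodule.eq_of_le_of_finrank_le hle (by omega)).symm
  -- decompose u along O ⊔ a' = ⊤ : u = c + y
  have htop1 : O ⊔ a' = ⊤ := aux_top O a' hO ha' hOa'
  obtain ⟨c, hcO, y, hya', hcy⟩ := Submodule.mem_sup.mp
    (htop1 ▸ Submodule.mem_top : u ∈ O ⊔ a')
  -- decompose y along O' ⊔ a'' = ⊤ : y = c' + z
  have htop2 : O' ⊔ a'' = ⊤ := aux_top O' a'' hO' ha'' hO'a''
  obtain ⟨c', hc'O', z, hza'', hc'z⟩ := Submodule.mem_sup.mp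
    (htop2 ▸ Submodule.mem_top : y ∈ O' ⊔ a'')
  -- z is not in S
  have hzS : z ∉ S := by
    intro hzSmem
    have hyS : y ∈ S := by
      have hy : y ∈ a' ⊓ (O' ⊔ S) := by
        refine ⟨hya', ?_⟩
        rw [← hc'z]
        exact add_mem (mem_sup_left hc'O') (mem_sup_right hzSmem)
      rwa [aux_meet a' O' S ha' hO' hS hO'a' hSa'] at hy
    have hu : u ∈ a ⊓ (O ⊔ S) := by
      refine ⟨hua, ?_⟩
      rw [← hcy]
      exact add_mem (mem_sup_left hcO) (mem_sup_right hyS)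
    rw [aux_meet a O S ha hO hS hOa hSa] at hu
    exact huS hu
  -- a ⊓ a'' = S
  have haa''S : a ⊓ a'' = S := aux_lines_meet a a'' S ha ha'' hS hSa hSa'' haa''
  -- the center
  set ostar : Fin 3 → K := z - u with hostar_def
  have hostar0 : ostar ≠ 0 := by
    intro h
    have hzu : z = u := by
      have := sub_eq_zero.mp h
      exact this
    have : a ≤ a'' := by
      rw [haSu]
      apply sup_le
      · rw [hSspan, span_le, Set.singleton_subset_iff]
        exact hSa'' hsS
      · rw [span_le, Set.singleton_subset_iff]; exact hzu ▸ hza''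
    exact haa'' (Submodule.eq_of_le_of_finrank_le this (by omega))
  refine ⟨span K {ostar}, finrank_span_singleton hostar0, ?_, ?_, ?_, ?_, ?_⟩
  · -- not ≤ a
    intro h
    have hoa : ostar ∈ a := h (mem_span_singleton_self ostar)
    have hza : z ∈ a := by
      have : z = u + ostar := by rw [hostar_def]; abel
      rw [this]; exact add_mem hua hoa
    exact hzS (haa''S ▸ ⟨hza, hza''⟩)
  · -- not ≤ a''
    intro h
    have hoa : ostar ∈ a'' := h (mem_span_singleton_self ostar)
    have hua'' : u ∈ a'' := by
      have : u = z - ostar := by rw [hostar_def]; abel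
      rw [this]; exact sub_mem hza'' hoa
    exact huS (haa''S ▸ ⟨hua, hua''⟩)
  · -- on line OO'
    intro _
    rw [span_le, Set.singleton_subset_iff]
    have : ostar = -c + -c' := by
      rw [hostar_def, ← hcy, ← hc'z]; abel
    rw [this]
    exact add_mem (mem_sup_left (neg_mem hcO)) (mem_sup_right (neg_mem hc'O'))
  · -- O = O' case
    intro hOO'
    have hle : span K {ostar} ≤ O := by
      rw [span_le, Set.singleton_subset_iff]
      have : ostar = -c + -c' := by
        rw [hostar_def, ← hcy, ← hc'z]; abel
      rw [this]
      exact add_mem (neg_mem hcO) (neg_mem (hOO' ▸ hc'O'))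
    exact Submodule.eq_of_le_of_finrank_le hle
      (by rw [finrank_span_singleton hostar0, hO])
  · -- main statement
    intro X X' X'' hX hX' hX'' hXa hX'a' hX'OX hX''a'' hX''O'X'
    obtain ⟨x, hx0, hxX, hXspan⟩ := aux_gen X hX
    have hxa : x ∈ a := hXa hxX
    -- write x = α • s + β • u
    rw [haSu] at hxa
    obtain ⟨w, hwS, v, hvU, hwv⟩ := Submodule.mem_sup.mp hxa
    rw [hSspan] at hwS
    obtain ⟨α, hα⟩ := mem_span_singleton.mp hwS
    obtain ⟨β, hβ⟩ := mem_span_singleton.mp hvU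
    have hx_eq : x = α • s + β • u := by rw [← hwv, hα, hβ]
    -- X ≠ O as subspaces
    have hOX : ¬ O ≤ X := by
      intro h
      exact hOa ((Submodule.eq_of_le_of_finrank_le h (by omega)) ▸ hXa)
    -- first image point
    set x1 : Fin 3 → K := α • s + β • y with hx1_def
    have hx1a' : x1 ∈ a' := add_mem (smul_mem _ _ (hSa' hsS)) (smul_mem _ _ hya')
    have hx1OX : x1 ∈ O ⊔ X := by
      have : x1 = x - β • c := by
        rw [hx1_def, hx_eq, ← hcy]; module
      rw [this]
      exact sub_mem (mem_sup_right hxX) (mem_sup_left (smul_mem _ _ hcO))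
    have hx10 : x1 ≠ 0 := by
      intro h
      have hxO : x ∈ O := by
        have h' : x - β • c = 0 := by
          rw [← h, hx1_def, hx_eq, ← hcy]; module
        rw [sub_eq_zero.mp h']; exact smul_mem _ _ hcO
      have : X = O := by
        rw [hXspan]
        exact (aux_eq_span O hO x hx0 hxO).symm
      exact hOa (this ▸ hXa)
    -- X' = span x1
    have hW' : Module.finrank K ↥(a' ⊓ (O ⊔ X)) = 1 :=
      aux_meet_rank a' O X ha' hO hX hOa' hOX
    have hX'eq : X' = a' ⊓ (O ⊔ X) :=
      Submodule.eq_of_le_of_finrank_le (le_inf hX'a' hX'OX) (by omega)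
    have hx1X' : x1 ∈ X' := by
      rw [hX'eq]
      have hle : span K {x1} ≤ a' ⊓ (O ⊔ X) := by
        rw [span_le, Set.singleton_subset_iff]; exact ⟨hx1a', hx1OX⟩
      have := Submodule.eq_of_le_of_finrank_le hle
        (by rw [finrank_span_singleton hx10]; omega)
      exact this ▸ mem_span_singleton_self x1
    -- second image point
    set x2 : Fin 3 → K := α • s + β • z with hx2_def
    have hx2a'' : x2 ∈ a'' := add_mem (smul_mem _ _ (hSa'' hsS)) (smul_mem _ _ hza'')
    have hx2O'X' : x2 ∈ O' ⊔ X' := by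
      have : x2 = x1 - β • c' := by
        rw [hx2_def, hx1_def, ← hc'z]; module
      rw [this]
      exact sub_mem (mem_sup_right hx1X') (mem_sup_left (smul_mem _ _ hc'O'))
    have hx20 : x2 ≠ 0 := by
      intro h
      have hx1O' : x1 ∈ O' := by
        have : x1 = β • c' := by
          have h' : x1 - β • c' = 0 := by
            rw [← h, hx2_def, hx1_def, ← hc'z]; module
          have := sub_eq_zero.mp h'; exact this
        rw [this]; exact smul_mem _ _ hc'O'
      have : X' = O' := by
        rw [aux_eq_span X' hX' x1 hx10 hx1X']
        exact (aux_eq_span O' hO' x1 hx10 hx1O').symm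
      exact hO'a' (this ▸ hX'a')
    -- X'' = span x2
    have hO'X' : ¬ O' ≤ X' := by
      intro h
      exact hO'a' ((Submodule.eq_of_le_of_finrank_le h (by omega)) ▸ hX'a')
    have hW'' : Module.finrank K ↥(a'' ⊓ (O' ⊔ X')) = 1 :=
      aux_meet_rank a'' O' X' ha'' hO' hX' hO'a'' hO'X'
    have hX''eq : X'' = a'' ⊓ (O' ⊔ X') :=
      Submodule.eq_of_le_of_finrank_le (le_inf hX''a'' hX''O'X') (by omega)
    have hX''span : X'' = span K {x2} := by
      rw [hX''eq]
      have hle : span K {x2} ≤ a'' ⊓ (O' ⊔ X') := by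
        rw [span_le, Set.singleton_subset_iff]; exact ⟨hx2a'', hx2O'X'⟩
      exact (Submodule.eq_of_le_of_finrank_le hle
        (by rw [finrank_span_singleton hx20]; omega)).symm
    -- conclude
    rw [hX''span, span_le, Set.singleton_subset_iff]
    have : x2 = β • ostar + x := by
      rw [hx2_def, hostar_def, hx_eq]; module
    rw [this]
    exact add_mem (mem_sup_left (smul_mem _ _ (mem_span_singleton_self ostar)))
      (mem_sup_right hxX)
end

section
/- (Composition of central perspectivities across skew lines lies in a line perspectivity.) Let K be a field. Let a and b be skew lines of ℙ³(K), and let m be a line with m ∩ a ≠ 0, m ∩ b ≠ 0, m ≠ a, m ≠ b. Let O be a point lying in the plane spanned by a and m but on neither a nor m, and let O' be a point lying in the plane spanned by m and b but on neither m nor b, with O ≠ O'. For each point X on a, let X' be the unique point on both line OX and m, and let X'' be the unique point on both line O'X' and b. Then for every point X on a, the line joining X and X'' meets the line OO' (their intersection is nonzero). Consequently, if the line d = OO' is skew to both a and b, the composite map X ↦ X'' equals the projection of a to b through d: X'' is the unique point of b contained in the plane spanned by d and X. -/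
open Module Submodule

private lemma inf_bot_of_ne {K : Type*} [Field K] {V : Type*} [AddCommGroup V] [Module K V]
    [FiniteDimensional K V] {P Q : Submodule K V}
    (hP : finrank K P = 1) (hQ : finrank K Q = 1) (h : P ≠ Q) : P ⊓ Q = ⊥ := by
  by_contra hne
  have h1 : 1 ≤ finrank K (P ⊓ Q : Submodule K V) := by
    rcases Nat.eq_zero_or_pos (finrank K (P ⊓ Q : Submodule K V)) with h0 | h0
    · exact absurd (Submodule.finrank_eq_zero.mp h0) hne
    · exact h0
  have hPQ : P ⊓ Q = P := Submodule.eq_of_le_of_finrank_le inf_le_left (by omega)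
  have : P ≤ Q := hPQ ▸ inf_le_right
  exact h (Submodule.eq_of_le_of_finrank_le this (by omega))

private lemma sup_two_of_ne {K : Type*} [Field K] {V : Type*} [AddCommGroup V] [Module K V]
    [FiniteDimensional K V] {P Q : Submodule K V}
    (hP : finrank K P = 1) (hQ : finrank K Q = 1) (h : P ≠ Q) :
    finrank K (P ⊔ Q : Submodule K V) = 2 := by
  have := Submodule.finrank_sup_add_finrank_inf_eq P Q
  rw [inf_bot_of_ne hP hQ h, finrank_bot] at this
  omega


/-- Composition of central perspectivities across skew lines of `ℙ³(K)`: with `a, b` skew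
lines, `m` a line meeting both, `O` a point of the plane `a ⊔ m` (on neither `a` nor `m`) and
`O'` a point of the plane `m ⊔ b` (on neither `m` nor `b`), `O ≠ O'`: if `X` is on `a`, `X'`
is the point on both the line `OX` and `m`, and `X''` is the point on both the line `O'X'`
and `b`, then the line `XX''` meets the line `OO'`; moreover if `d = OO'` is skew to both `a`
and `b`, then `X''` is the unique point of `b` in the plane spanned by `d` and `X`, i.e.
`b ⊓ (d ⊔ X) = X''`. -/
theorem comp_of_perspectivities_skew {K : Type*} [Field K]
    (a b m O O' : Submodule K (Fin 4 → K))
    (ha : Module.finrank K a = 2) (hb : Module.finrank K b = 2)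
    (hm : Module.finrank K m = 2)
    (hab : a ⊓ b = ⊥)
    (hma : m ⊓ a ≠ ⊥) (hmb : m ⊓ b ≠ ⊥) (hma' : m ≠ a) (hmb' : m ≠ b)
    (hO : Module.finrank K O = 1) (hOam : O ≤ a ⊔ m) (hOa : ¬ O ≤ a) (hOm : ¬ O ≤ m)
    (hO' : Module.finrank K O' = 1) (hO'mb : O' ≤ m ⊔ b) (hO'm : ¬ O' ≤ m) (hO'b : ¬ O' ≤ b)
    (hOO' : O ≠ O') :
    ∀ X X' X'' : Submodule K (Fin 4 → K),
      Module.finrank K X = 1 → Module.finrank K X' = 1 → Module.finrank K X'' = 1 →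
      X ≤ a →
      X' ≤ m → X' ≤ O ⊔ X →
      X'' ≤ b → X'' ≤ O' ⊔ X' →
      (X ⊔ X'') ⊓ (O ⊔ O') ≠ ⊥ ∧
      ((O ⊔ O') ⊓ a = ⊥ → (O ⊔ O') ⊓ b = ⊥ → b ⊓ ((O ⊔ O') ⊔ X) = X'') := by
  intro X X' X'' hX hX' hX'' hXa hX'm hX'OX hX''b hX''O'X'
  have hV : finrank K (Fin 4 → K) = 4 := by simp
  -- d = O ⊔ O' has rank 2
  have hd : finrank K (O ⊔ O' : Submodule K (Fin 4 → K)) = 2 := sup_two_of_ne hO hO' hOO'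
  -- X ≠ X''
  have hXne : X ≠ X'' := by
    intro h
    have : X ≤ a ⊓ b := le_inf hXa (h ▸ hX''b)
    rw [hab, le_bot_iff] at this
    rw [this, finrank_bot] at hX
    omega
  have hXX'' : finrank K (X ⊔ X'' : Submodule K (Fin 4 → K)) = 2 :=
    sup_two_of_ne hX hX'' hXne
  -- X'' ≤ (O ⊔ O') ⊔ X
  have hX''W : X'' ≤ (O ⊔ O') ⊔ X := by
    refine hX''O'X'.trans (sup_le ?_ (hX'OX.trans (sup_le ?_ ?_)))
    · exact le_sup_of_le_left le_sup_right
    · exact le_sup_of_le_left le_sup_left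
    · exact le_sup_right
  have hWle : finrank K ((O ⊔ O') ⊔ X : Submodule K (Fin 4 → K)) ≤ 3 := by
    have := Submodule.finrank_sup_add_finrank_inf_eq (O ⊔ O') X
    omega
  constructor
  · -- the line XX'' meets OO'
    intro hbot
    have hsub : (X ⊔ X'') ⊔ (O ⊔ O') ≤ (O ⊔ O') ⊔ X :=
      sup_le (sup_le (le_sup_right) hX''W) le_sup_left
    have h1 := Submodule.finrank_sup_add_finrank_inf_eq (X ⊔ X'') (O ⊔ O')
    rw [hbot, finrank_bot] at h1
    have h2 : finrank K ((X ⊔ X'') ⊔ (O ⊔ O') : Submodule K (Fin 4 → K)) ≤ 3 :=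
      le_trans (Submodule.finrank_mono hsub) hWle
    omega
  · intro hda hdb
    -- finrank (d ⊔ X) = 3
    have hdX : (O ⊔ O') ⊓ X = ⊥ := by
      rw [← le_bot_iff, ← hda]
      exact inf_le_inf_left _ hXa
    have h3 : finrank K ((O ⊔ O') ⊔ X : Submodule K (Fin 4 → K)) = 3 := by
      have := Submodule.finrank_sup_add_finrank_inf_eq (O ⊔ O') X
      rw [hdX, finrank_bot] at this
      omega
    -- b ⊔ d has rank 4
    have h4 : finrank K (b ⊔ (O ⊔ O') : Submodule K (Fin 4 → K)) = 4 := by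
      have heq := Submodule.finrank_sup_add_finrank_inf_eq b (O ⊔ O')
      rw [inf_comm, hdb, finrank_bot] at heq
      have := Submodule.finrank_le (b ⊔ (O ⊔ O') : Submodule K (Fin 4 → K))
      omega
    -- hence b ⊔ (d ⊔ X) has rank 4 and b ⊓ (d ⊔ X) has rank 1
    have h5 : finrank K (b ⊔ ((O ⊔ O') ⊔ X) : Submodule K (Fin 4 → K)) = 4 := by
      have hle := Submodule.finrank_le (b ⊔ ((O ⊔ O') ⊔ X) : Submodule K (Fin 4 → K))
      have hmono : (b ⊔ (O ⊔ O') : Submodule K (Fin 4 → K)) ≤ b ⊔ ((O ⊔ O') ⊔ X) :=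
        sup_le_sup_left le_sup_left b
      have := Submodule.finrank_mono hmono
      omega
    have h6 : finrank K (b ⊓ ((O ⊔ O') ⊔ X) : Submodule K (Fin 4 → K)) = 1 := by
      have := Submodule.finrank_sup_add_finrank_inf_eq b ((O ⊔ O') ⊔ X)
      omega
    exact (Submodule.eq_of_le_of_finrank_le (le_inf hX''b hX''W) (by omega)).symm
end
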